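/- arXiv:2404.02453 — 11 statements merged into one kernel-verified Lean document; each statement's English description precedes it below -/
import Mathlib

section
/- Let π_a : (0,1) → [0,∞) and π_v : (0,∞) → [0,∞) be measurable prior densities related by π_v(v) = (1 + 2vn₀/σ₀²)⁻² · π_a(f(v)) for all v > 0. Define the normalizing constant c(a₀) = ∫_ℝ exp{−(a₀/(2σ₀²))(S₀ + n₀(ȳ₀ − t)²)} dt for a₀ ∈ (0,1), the normalized-power-prior marginal g_NPP(θ) = ∫_{(0,1)} exp{−(n/(2σ²))(ȳ − θ)²} · exp{−(a₀/(2σ₀²))(S₀ + n₀(ȳ₀ − θ)²)} · c(a₀)⁻¹ · π_a(a₀) da₀, and the hierarchical-model marginal (with improper uniform prior on μ) g_BHM(θ) = ∫_{(0,∞)} ∫_ℝ ∫_ℝ v⁻¹ exp{−(n/(2σ²))(ȳ − θ)² − (n₀/(2σ₀²))(ȳ₀ − θ₀)² − ((θ − μ)² + (θ₀ − μ)²)/(2v)} π_v(v) dθ₀ dμ dv. Assume g_NPP(θ) and g_BHM(θ) are finite for every θ ∈ ℝ. Then there exists a constant C > 0, not depending on θ, such that g_NPP(θ) = C · g_BHM(θ)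 for all θ ∈ ℝ. -/
open MeasureTheory Real Set

/-!
Both marginals equal `exp (-(n / (2σ²)) (ȳ - θ)²)` times a constant times
`J(θ) = ∫₀¹ √a · exp (-a p (ȳ₀ - θ)²) π_a(a) da` with `p = n₀ / (2σ₀²)`.
For the normalized power prior, `c(a)` is a Gaussian integral proportional to
`a^(-1/2) exp (-a S₀ / (2σ₀²))`, which cancels the `S₀` part of the power likelihood.
For the hierarchical model, integrating out `θ₀` and then `μ` (two Gaussian convolutions)
leaves `2π (1 + 4pv)^(-1/2) exp (-(p / (1 + 4pv)) (ȳ₀ - θ)²)`; the substitution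
`a = f(v) = (1 + 4pv)⁻¹` has Jacobian `4p (1 + 4pv)⁻²`, exactly the factor relating `π_v`
to `π_a`, and turns the `v`-integral into `J(θ)`.
-/

theorem integral_exp_neg_mul_sub_sq (b a : ℝ) :
    ∫ x : ℝ, exp (-b * (x - a) ^ 2) = √(π / b) :=
  (integral_sub_right_eq_self (fun x => exp (-b * x ^ 2)) a).trans (integral_gaussian b)

theorem integral_exp_neg_mul_sub_sq_sub_mul_sub_sq {p q : ℝ} (hpq : p + q ≠ 0) (a b : ℝ) :
    ∫ x : ℝ, exp (-p * (x - a) ^ 2 - q * (x - b) ^ 2)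
      = √(π / (p + q)) * exp (-(p * q / (p + q)) * (a - b) ^ 2) := by
  have complete_square : ∀ x : ℝ, -p * (x - a) ^ 2 - q * (x - b) ^ 2
      = -(p + q) * (x - (p * a + q * b) / (p + q)) ^ 2 + -(p * q / (p + q)) * (a - b) ^ 2 := by
    intro x
    field_simp
    ring
  simp_rw [complete_square, exp_add]
  rw [integral_mul_const, integral_exp_neg_mul_sub_sq]

theorem integral_exp_neg_mul_add_mul_sub_sq (s S b y : ℝ) :
    ∫ t : ℝ, exp (-s * (S + b * (y - t) ^ 2)) = exp (-s * S) * √(π / (s * b)) := by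
  have rearrange : ∀ t : ℝ, -s * (S + b * (y - t) ^ 2) = -(s * b) * (t - y) ^ 2 + -s * S :=
    fun t => by ring
  simp_rw [rearrange, exp_add]
  rw [integral_mul_const, integral_exp_neg_mul_sub_sq, mul_comm]

theorem integral_integral_exp_hierarchical {p v : ℝ} (hp : 0 ≤ p) (hv : 0 < v) (y θ : ℝ) :
    ∫ μ : ℝ, ∫ θ0 : ℝ, exp (-(p * (y - θ0) ^ 2) - ((θ - μ) ^ 2 + (θ0 - μ) ^ 2) / (2 * v))
      = 2 * π * v / √(1 + 4 * p * v) * exp (-(p / (1 + 4 * p * v)) * (y - θ) ^ 2) := by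
  have h2pv : 0 < 1 + 2 * p * v := by positivity
  have h4pv : 0 < 1 + 4 * p * v := by positivity
  have inner : ∀ μ : ℝ,
      ∫ θ0 : ℝ, exp (-(p * (y - θ0) ^ 2) - ((θ - μ) ^ 2 + (θ0 - μ) ^ 2) / (2 * v))
        = √(2 * π * v / (1 + 2 * p * v)) *
            exp (-(2 * v)⁻¹ * (μ - θ) ^ 2 - p / (1 + 2 * p * v) * (μ - y) ^ 2) := by
    intro μ
    have split : ∀ θ0 : ℝ,
        -(p * (y - θ0) ^ 2) - ((θ - μ) ^ 2 + (θ0 - μ) ^ 2) / (2 * v)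
          = -(2 * v)⁻¹ * (μ - θ) ^ 2 + (-p * (θ0 - y) ^ 2 - (2 * v)⁻¹ * (θ0 - μ) ^ 2) := by
      intro θ0
      field_simp
      ring
    simp_rw [split, exp_add]
    rw [integral_const_mul, integral_exp_neg_mul_sub_sq_sub_mul_sub_sq (by positivity),
      ← mul_assoc, mul_comm (exp _), mul_assoc, ← exp_add]
    congr 2
    · field_simp
      ring
    · field_simp
      ring
  simp_rw [inner]
  rw [integral_const_mul, integral_exp_neg_mul_sub_sq_sub_mul_sub_sq (by positivity),
    ← mul_assoc, ← sqrt_mul (by positivity)]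
  congr 1
  · rw [show 2 * π * v / (1 + 2 * p * v) * (π / ((2 * v)⁻¹ + p / (1 + 2 * p * v)))
        = (2 * π * v) ^ 2 / (1 + 4 * p * v) by field_simp; ring,
      sqrt_div' _ h4pv.le, sqrt_sq (by positivity)]
  · congr 1
    field_simp
    ring

theorem setIntegral_Ioo_zero_one_eq_setIntegral_Ioi {E : Type*} [NormedAddCommGroup E]
    [NormedSpace ℝ E] {D : ℝ} (hD : 0 < D) (g : ℝ → E) :
    ∫ a in Ioo (0 : ℝ) 1, g a = ∫ v in Ioi (0 : ℝ), (D / (1 + D * v) ^ 2) • g (1 + D * v)⁻¹ := by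
  have image_eq : (fun v : ℝ => (1 + D * v)⁻¹) '' Ioi 0 = Ioo 0 1 := by
    ext a
    simp only [mem_image, mem_Ioi, mem_Ioo]
    constructor
    · rintro ⟨v, hv, rfl⟩
      exact ⟨by positivity, inv_lt_one_of_one_lt₀ (by nlinarith)⟩
    · rintro ⟨ha0, ha1⟩
      refine ⟨(a⁻¹ - 1) / D, div_pos (by linarith [(one_lt_inv₀ ha0).mpr ha1]) hD, ?_⟩
      rw [mul_div_cancel₀ _ hD.ne', add_sub_cancel, inv_inv]
  have injOn : InjOn (fun v : ℝ => (1 + D * v)⁻¹) (Ioi 0) := fun x _ y _ hxy =>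
    mul_left_cancel₀ hD.ne' (add_left_cancel (inv_injective hxy))
  have deriv : ∀ v ∈ Ioi (0 : ℝ),
      HasDerivWithinAt (fun v : ℝ => (1 + D * v)⁻¹) (-D / (1 + D * v) ^ 2) (Ioi 0) v := by
    intro v hv
    have hne : 1 + D * v ≠ 0 := by have : (0 : ℝ) < v := hv; positivity
    have affine : HasDerivAt (fun v : ℝ => 1 + D * v) D v := by
      simpa using ((hasDerivAt_id v).const_mul D).const_add 1
    exact (affine.inv hne).hasDerivWithinAt
  rw [← image_eq, integral_image_eq_integral_abs_deriv_smul measurableSet_Ioi deriv injOn g]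
  refine setIntegral_congr_fun measurableSet_Ioi fun v hv => ?_
  have : (0 : ℝ) < v := hv
  rw [abs_div, abs_neg, abs_of_pos hD, abs_of_pos (by positivity)]

theorem setIntegral_normalizedPowerPrior_eq {σ02 n0 : ℝ} (S0 y : ℝ) {c : ℝ → ℝ}
    (hc : ∀ a, c a = ∫ t : ℝ, exp (-(a / (2 * σ02)) * (S0 + n0 * (y - t) ^ 2)))
    (K d : ℝ) (πa : ℝ → ℝ) :
    ∫ a in Ioo (0 : ℝ) 1, K * exp (-(a / (2 * σ02)) * (S0 + n0 * d ^ 2)) * (c a)⁻¹ * πa a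
      = √(n0 / (2 * σ02) / π) * K *
          ∫ a in Ioo (0 : ℝ) 1, √a * exp (-(n0 / (2 * σ02) * d ^ 2) * a) * πa a := by
  rw [← integral_const_mul]
  refine setIntegral_congr_fun measurableSet_Ioo fun a ha => ?_
  have hc_closed : c a = exp (-(a / (2 * σ02)) * S0) * √(π / (a / (2 * σ02) * n0)) := by
    rw [hc, integral_exp_neg_mul_add_mul_sub_sq]
  have sqrt_ratio : (√(π / (a / (2 * σ02) * n0)))⁻¹ = √a * √(n0 / (2 * σ02) / π) := by
    rw [← sqrt_inv, ← sqrt_mul ha.1.le, inv_div]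
    ring_nf
  have exp_ratio : exp (-(a / (2 * σ02)) * (S0 + n0 * d ^ 2)) * (exp (-(a / (2 * σ02)) * S0))⁻¹
      = exp (-(n0 / (2 * σ02) * d ^ 2) * a) := by
    rw [← exp_neg, ← exp_add]
    congr 1
    ring
  rw [hc_closed, mul_inv, sqrt_ratio, ← exp_ratio]
  ring

theorem integral_integral_hierarchical_integrand {p v : ℝ} (hp : 0 ≤ p) (hv : 0 < v)
    (A y θ w : ℝ) :
    ∫ μ : ℝ, ∫ θ0 : ℝ,
        v⁻¹ * exp (A - p * (y - θ0) ^ 2 - ((θ - μ) ^ 2 + (θ0 - μ) ^ 2) / (2 * v)) * w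
      = 2 * π * exp A * w / √(1 + 4 * p * v) * exp (-(p / (1 + 4 * p * v)) * (y - θ) ^ 2) := by
  have split : ∀ μ θ0 : ℝ,
      v⁻¹ * exp (A - p * (y - θ0) ^ 2 - ((θ - μ) ^ 2 + (θ0 - μ) ^ 2) / (2 * v)) * w
        = v⁻¹ * exp A * w *
            exp (-(p * (y - θ0) ^ 2) - ((θ - μ) ^ 2 + (θ0 - μ) ^ 2) / (2 * v)) := by
    intro μ θ0
    rw [sub_sub, sub_eq_add_neg, exp_add, neg_add']
    ring
  simp_rw [split, integral_const_mul]
  rw [integral_integral_exp_hierarchical hp hv]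
  field_simp

theorem setIntegral_hierarchical_eq {p : ℝ} (hp : 0 < p) (A y θ : ℝ) {πa πv : ℝ → ℝ}
    (hrel : ∀ v ∈ Ioi (0 : ℝ), πv v = ((1 + 4 * p * v) ^ 2)⁻¹ * πa (1 + 4 * p * v)⁻¹) :
    ∫ v in Ioi (0 : ℝ), ∫ μ : ℝ, ∫ θ0 : ℝ,
        v⁻¹ * exp (A - p * (y - θ0) ^ 2 - ((θ - μ) ^ 2 + (θ0 - μ) ^ 2) / (2 * v)) * πv v
      = π / (2 * p) * exp A *
          ∫ a in Ioo (0 : ℝ) 1, √a * exp (-(p * (y - θ) ^ 2) * a) * πa a := by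
  rw [setIntegral_Ioo_zero_one_eq_setIntegral_Ioi (by positivity : 0 < 4 * p),
    ← integral_const_mul]
  refine setIntegral_congr_fun measurableSet_Ioi fun v hv => ?_
  have h4pv : 0 < 1 + 4 * p * v := by have : (0 : ℝ) < v := hv; positivity
  rw [integral_integral_hierarchical_integrand hp.le hv, hrel v hv, smul_eq_mul, sqrt_inv]
  field_simp
  ring

theorem stmt_0_general (σ2 σ02 n n0 : ℝ) (hσ02 : 0 < σ02) (hn0 : 0 < n0)
    (ybar ybar0 S0 : ℝ)
    (f : ℝ → ℝ) (hf : ∀ v, f v = (1 + 2 * v * n0 / σ02)⁻¹)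
    (πa πv : ℝ → ℝ)
    (hrel : ∀ v ∈ Ioi (0 : ℝ), πv v = ((1 + 2 * v * n0 / σ02) ^ 2)⁻¹ * πa (f v))
    (c : ℝ → ℝ)
    (hc : ∀ a0, c a0 = ∫ t : ℝ, Real.exp (-(a0 / (2 * σ02)) * (S0 + n0 * (ybar0 - t) ^ 2)))
    (gNPP gBHM : ℝ → ℝ)
    (hgNPP : ∀ θ, gNPP θ = ∫ a0 in Ioo (0 : ℝ) 1,
        Real.exp (-(n / (2 * σ2)) * (ybar - θ) ^ 2) *
          Real.exp (-(a0 / (2 * σ02)) * (S0 + n0 * (ybar0 - θ) ^ 2)) * (c a0)⁻¹ * πa a0)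
    (hgBHM : ∀ θ, gBHM θ = ∫ v in Ioi (0 : ℝ), ∫ μ : ℝ, ∫ θ0 : ℝ,
        v⁻¹ * Real.exp (-(n / (2 * σ2)) * (ybar - θ) ^ 2 -
            (n0 / (2 * σ02)) * (ybar0 - θ0) ^ 2 -
            ((θ - μ) ^ 2 + (θ0 - μ) ^ 2) / (2 * v)) * πv v) :
    ∃ C : ℝ, 0 < C ∧ ∀ θ : ℝ, gNPP θ = C * gBHM θ := by
  have hp : 0 < n0 / (2 * σ02) := by positivity
  have hrel' : ∀ v ∈ Ioi (0 : ℝ), πv v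
      = ((1 + 4 * (n0 / (2 * σ02)) * v) ^ 2)⁻¹ * πa (1 + 4 * (n0 / (2 * σ02)) * v)⁻¹ := by
    intro v hv
    rw [hrel v hv, hf, show 1 + 2 * v * n0 / σ02 = 1 + 4 * (n0 / (2 * σ02)) * v by ring]
  refine ⟨√(n0 / (2 * σ02) / π) * (2 * (n0 / (2 * σ02)) / π), by positivity, fun θ => ?_⟩
  rw [hgNPP, hgBHM, setIntegral_normalizedPowerPrior_eq S0 ybar0 hc,
    setIntegral_hierarchical_eq hp _ _ _ hrel']
  field_simp

/-- if the prior `π_v` on the BHM variance and the prior `π_a` on the NPP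
discounting parameter are related by `π_v(v) = (1 + 2vn₀/σ₀²)⁻² π_a(f(v))`, then the
marginal posteriors of `θ` under the NPP and the BHM are proportional (hence identical
once normalized). -/
theorem stmt_0 (σ2 σ02 n n0 : ℝ) (hσ2 : 0 < σ2) (hσ02 : 0 < σ02) (hn : 0 < n) (hn0 : 0 < n0)
    (ybar ybar0 S0 : ℝ) (hS0 : 0 ≤ S0)
    (f : ℝ → ℝ) (hf : ∀ v, f v = (1 + 2 * v * n0 / σ02)⁻¹)
    (πa πv : ℝ → ℝ) (hπa_meas : Measurable πa) (hπv_meas : Measurable πv)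
    (hπa_nonneg : ∀ a ∈ Ioo (0 : ℝ) 1, 0 ≤ πa a)
    (hπv_nonneg : ∀ v ∈ Ioi (0 : ℝ), 0 ≤ πv v)
    (hrel : ∀ v ∈ Ioi (0 : ℝ), πv v = ((1 + 2 * v * n0 / σ02) ^ 2)⁻¹ * πa (f v))
    (c : ℝ → ℝ)
    (hc : ∀ a0, c a0 = ∫ t : ℝ, Real.exp (-(a0 / (2 * σ02)) * (S0 + n0 * (ybar0 - t) ^ 2)))
    (gNPP gBHM : ℝ → ℝ)
    (hgNPP : ∀ θ, gNPP θ = ∫ a0 in Ioo (0 : ℝ) 1,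
        Real.exp (-(n / (2 * σ2)) * (ybar - θ) ^ 2) *
          Real.exp (-(a0 / (2 * σ02)) * (S0 + n0 * (ybar0 - θ) ^ 2)) * (c a0)⁻¹ * πa a0)
    (hgBHM : ∀ θ, gBHM θ = ∫ v in Ioi (0 : ℝ), ∫ μ : ℝ, ∫ θ0 : ℝ,
        v⁻¹ * Real.exp (-(n / (2 * σ2)) * (ybar - θ) ^ 2 -
            (n0 / (2 * σ02)) * (ybar0 - θ0) ^ 2 -
            ((θ - μ) ^ 2 + (θ0 - μ) ^ 2) / (2 * v)) * πv v)
    (hNPP_fin : ∀ θ : ℝ, IntegrableOn (fun a0 =>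
        Real.exp (-(n / (2 * σ2)) * (ybar - θ) ^ 2) *
          Real.exp (-(a0 / (2 * σ02)) * (S0 + n0 * (ybar0 - θ) ^ 2)) * (c a0)⁻¹ * πa a0)
        (Ioo (0 : ℝ) 1))
    (hBHM_fin : ∀ θ : ℝ, IntegrableOn (fun v => ∫ μ : ℝ, ∫ θ0 : ℝ,
        v⁻¹ * Real.exp (-(n / (2 * σ2)) * (ybar - θ) ^ 2 -
            (n0 / (2 * σ02)) * (ybar0 - θ0) ^ 2 -
            ((θ - μ) ^ 2 + (θ0 - μ) ^ 2) / (2 * v)) * πv v)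
        (Ioi (0 : ℝ))) :
    ∃ C : ℝ, 0 < C ∧ ∀ θ : ℝ, gNPP θ = C * gBHM θ :=
  stmt_0_general σ2 σ02 n n0 hσ02 hn0 ybar ybar0 S0 f hf πa πv hrel c hc gNPP gBHM hgNPP hgBHM
end

section
/- For v > 0 define A(v) = n/σ² + (n₀/σ₀²)/(2v(n₀/σ₀² + 1/(2v))) and B(v) = nȳ/σ² + n₀ȳ₀/(σ₀²(1 + 2vn₀/σ₀²)), and for a₀ > 0 define σ_p²(a₀) = (n/σ² + a₀n₀/σ₀²)⁻¹ and μ_p(a₀) = σ_p²(a₀) · (nȳ/σ² + a₀n₀ȳ₀/σ₀²). Then, for every v > 0 and a₀ > 0, the two equalities σ_p²(a₀) = A(v)⁻¹ and μ_p(a₀) = B(v)/A(v) hold simultaneously if and only if a₀ = f(v) = (1 + 2vn₀/σ₀²)⁻¹; in particular, (n₀/σ₀²)/(2v(n₀/σ₀² + 1/(2v))) = f(v) · n₀/σ₀². -/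
/-!
Clearing the fraction `1 / (2v)` gives `2v(c + 1/(2v)) = 1 + 2vc`, so the vague-hyperprior limit of
the hierarchical model has precision `n/σ² + f(v) n₀/σ₀²` and linear coefficient
`nȳ/σ² + f(v) n₀ȳ₀/σ₀²`: it is the power-prior posterior with `a₀ = f(v)`. Since `a₀ ↦ (τ + a₀c)⁻¹`
is injective for `c ≠ 0`, matching the variances already forces `a₀ = f(v)`, and then the means agree.
-/

lemma two_mul_mul_add_one_div {v : ℝ} (hv : v ≠ 0) (c : ℝ) :
    2 * v * (c + 1 / (2 * v)) = 1 + 2 * v * c := by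
  field_simp
  ring

lemma div_two_mul_mul_add_one_div {v : ℝ} (hv : v ≠ 0) (c : ℝ) :
    c / (2 * v * (c + 1 / (2 * v))) = (1 + 2 * v * c)⁻¹ * c := by
  rw [two_mul_mul_add_one_div hv, div_eq_inv_mul]

lemma inv_add_mul_right_inj {K : Type*} [DivisionRing K] {τ c a b : K} (hc : c ≠ 0) :
    (τ + a * c)⁻¹ = (τ + b * c)⁻¹ ↔ a = b := by
  rw [inv_inj, add_right_inj, mul_left_inj' hc]

theorem stmt_1_general (σ2 σ02 n n0 : ℝ) (hσ02 : 0 < σ02) (hn0 : 0 < n0)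
    (ybar ybar0 : ℝ)
    (f A B σp2 μp : ℝ → ℝ)
    (hf : ∀ v, f v = (1 + 2 * v * n0 / σ02)⁻¹)
    (hA : ∀ v, A v = n / σ2 + (n0 / σ02) / (2 * v * (n0 / σ02 + 1 / (2 * v))))
    (hB : ∀ v, B v = n * ybar / σ2 + n0 * ybar0 / (σ02 * (1 + 2 * v * n0 / σ02)))
    (hσp2 : ∀ a0, σp2 a0 = (n / σ2 + a0 * n0 / σ02)⁻¹)
    (hμp : ∀ a0, μp a0 = σp2 a0 * (n * ybar / σ2 + a0 * n0 * ybar0 / σ02)) :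
    (∀ v > 0, ∀ a0 > 0,
      (σp2 a0 = (A v)⁻¹ ∧ μp a0 = B v / A v) ↔ a0 = f v) ∧
    (∀ v > 0, (n0 / σ02) / (2 * v * (n0 / σ02 + 1 / (2 * v))) = f v * (n0 / σ02)) := by
  have hc : n0 / σ02 ≠ 0 := (div_pos hn0 hσ02).ne'
  have discount : ∀ v > 0,
      (n0 / σ02) / (2 * v * (n0 / σ02 + 1 / (2 * v))) = f v * (n0 / σ02) := by
    intro v hv
    rw [hf, div_two_mul_mul_add_one_div hv.ne', mul_div_assoc]
  refine ⟨fun v hv a0 _ => ?_, discount⟩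
  have hAv : A v = n / σ2 + f v * (n0 / σ02) := by rw [hA, discount v hv]
  have hBv : B v = n * ybar / σ2 + f v * n0 * ybar0 / σ02 := by
    rw [hB, hf, mul_comm σ02, ← div_div]; ring
  have variance_iff : σp2 a0 = (A v)⁻¹ ↔ a0 = f v := by
    rw [hσp2, hAv, mul_div_assoc, inv_add_mul_right_inj hc]
  refine ⟨fun h => variance_iff.1 h.1, fun h => ⟨variance_iff.2 h, ?_⟩⟩
  rw [hμp, variance_iff.2 h, hBv, h]
  exact (div_eq_inv_mul _ _).symm

/-- the BHM conditional posterior (precision `A(v)`, linear coefficient `B(v)`,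
in the vague-hyperprior limit) matches the NPP conditional posterior (variance `σ_p²(a₀)`,
mean `μ_p(a₀)`) if and only if `a₀ = f(v) = (1 + 2vn₀/σ₀²)⁻¹`; in particular
`(n₀/σ₀²)/(2v(n₀/σ₀² + 1/(2v))) = f(v)·n₀/σ₀²`. -/
theorem stmt_1 (σ2 σ02 n n0 : ℝ) (hσ2 : 0 < σ2) (hσ02 : 0 < σ02) (hn : 0 < n) (hn0 : 0 < n0)
    (ybar ybar0 : ℝ)
    (f A B σp2 μp : ℝ → ℝ)
    (hf : ∀ v, f v = (1 + 2 * v * n0 / σ02)⁻¹)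
    (hA : ∀ v, A v = n / σ2 + (n0 / σ02) / (2 * v * (n0 / σ02 + 1 / (2 * v))))
    (hB : ∀ v, B v = n * ybar / σ2 + n0 * ybar0 / (σ02 * (1 + 2 * v * n0 / σ02)))
    (hσp2 : ∀ a0, σp2 a0 = (n / σ2 + a0 * n0 / σ02)⁻¹)
    (hμp : ∀ a0, μp a0 = σp2 a0 * (n * ybar / σ2 + a0 * n0 * ybar0 / σ02)) :
    (∀ v > 0, ∀ a0 > 0,
      (σp2 a0 = (A v)⁻¹ ∧ μp a0 = B v / A v) ↔ a0 = f v) ∧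
    (∀ v > 0, (n0 / σ02) / (2 * v * (n0 / σ02 + 1 / (2 * v))) = f v * (n0 / σ02)) :=
  stmt_1_general σ2 σ02 n n0 hσ02 hn0 ybar ybar0 f A B σp2 μp hf hA hB hσp2 hμp
end

section
/- For all v > 0, ν² > 0, setting U = 2/v + 1/ν² and W = n₀/σ₀² + 1/v − 1/(v²U), one has W > 0; and for all α, θ ∈ ℝ the Gaussian integral over the historical mean θ₀ converges and equals ∫_ℝ exp{−(n₀/(2σ₀²))(ȳ₀ − θ₀)² − θ₀²/(2v) + ((θ + θ₀)/v + α/ν²)²/(2U)} dθ₀ = (2π/W)^{1/2} · exp{(θ/v + α/ν²)²/(2U) − n₀ȳ₀²/(2σ₀²) + (n₀ȳ₀/σ₀² + (θ/v + α/ν²)/(vU))²/(2W)}. -/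
open MeasureTheory Real

lemma gauss_lin (b c d : ℝ) (hb : 0 < b) :
    Integrable (fun x : ℝ => Real.exp (-b * x ^ 2 + c * x + d)) ∧
    (∫ x : ℝ, Real.exp (-b * x ^ 2 + c * x + d)) =
      Real.sqrt (π / b) * Real.exp (d + c ^ 2 / (4 * b)) := by
  have hkey : ∀ x : ℝ, -b * x ^ 2 + c * x + d
      = -b * (x - c / (2 * b)) ^ 2 + (d + c ^ 2 / (4 * b)) := by
    intro x; field_simp; ring
  have hfun : (fun x : ℝ => Real.exp (-b * x ^ 2 + c * x + d))
      = fun x : ℝ => Real.exp (-b * (x - c / (2 * b)) ^ 2) * Real.exp (d + c ^ 2 / (4 * b)) := by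
    funext x; rw [hkey x, Real.exp_add]
  constructor
  · rw [hfun]
    exact ((integrable_exp_neg_mul_sq hb).comp_sub_right (c / (2 * b))).mul_const _
  · rw [hfun, integral_mul_const]
    rw [show (∫ x : ℝ, Real.exp (-b * (x - c / (2 * b)) ^ 2))
        = ∫ x : ℝ, Real.exp (-b * x ^ 2) from
      integral_sub_right_eq_self (fun x => Real.exp (-b * x ^ 2)) (c / (2 * b))]
    rw [integral_gaussian]

/-- positivity of `W` and the Gaussian integral over the historical mean `θ₀`
in the Bayesian hierarchical model after the hypermean `μ` has been integrated out. -/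
theorem stmt_6 (σ02 n0 : ℝ) (hσ02 : 0 < σ02) (hn0 : 0 < n0) (ybar0 : ℝ)
    (v ν2 : ℝ) (hv : 0 < v) (hν2 : 0 < ν2) (U W : ℝ)
    (hU : U = 2 / v + 1 / ν2)
    (hW : W = n0 / σ02 + 1 / v - 1 / (v ^ 2 * U)) :
    0 < W ∧
    ∀ α θ : ℝ,
      Integrable (fun θ0 : ℝ =>
        Real.exp (-(n0 / (2 * σ02)) * (ybar0 - θ0) ^ 2 - θ0 ^ 2 / (2 * v) +
          ((θ + θ0) / v + α / ν2) ^ 2 / (2 * U))) ∧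
      (∫ θ0 : ℝ,
          Real.exp (-(n0 / (2 * σ02)) * (ybar0 - θ0) ^ 2 - θ0 ^ 2 / (2 * v) +
            ((θ + θ0) / v + α / ν2) ^ 2 / (2 * U))) =
        Real.sqrt (2 * π / W) *
          Real.exp ((θ / v + α / ν2) ^ 2 / (2 * U) - n0 * ybar0 ^ 2 / (2 * σ02) +
            (n0 * ybar0 / σ02 + (θ / v + α / ν2) / (v * U)) ^ 2 / (2 * W)) := by
  have hUpos : 0 < U := by
    rw [hU]; positivity
  have hWpos : 0 < W := by
    have h1 : (0:ℝ) < 1 / v - 1 / (v ^ 2 * U) := by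
      rw [sub_pos, div_lt_div_iff₀ (by positivity) hv]
      have : v ^ 2 * U = v * (2 + v / ν2) := by rw [hU]; field_simp
      rw [this]
      nlinarith [div_pos hv hν2]
    have h2 : (0:ℝ) < n0 / σ02 := by positivity
    rw [hW]; linarith
  refine ⟨hWpos, fun α θ => ?_⟩
  set B : ℝ := n0 * ybar0 / σ02 + (θ / v + α / ν2) / (v * U) with hB
  set C : ℝ := (θ / v + α / ν2) ^ 2 / (2 * U) - n0 * ybar0 ^ 2 / (2 * σ02) with hC
  have hexp : ∀ θ0 : ℝ,
      (-(n0 / (2 * σ02)) * (ybar0 - θ0) ^ 2 - θ0 ^ 2 / (2 * v) +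
        ((θ + θ0) / v + α / ν2) ^ 2 / (2 * U))
      = -(W / 2) * θ0 ^ 2 + B * θ0 + C := by
    intro θ0
    rw [hB, hC, hW]
    have hσ : σ02 ≠ 0 := ne_of_gt hσ02
    have hvne : v ≠ 0 := ne_of_gt hv
    have hνne : ν2 ≠ 0 := ne_of_gt hν2
    have hUne : U ≠ 0 := ne_of_gt hUpos
    field_simp
    ring
  have hgl := gauss_lin (W / 2) B C (by linarith)
  have hfun : (fun θ0 : ℝ =>
      Real.exp (-(n0 / (2 * σ02)) * (ybar0 - θ0) ^ 2 - θ0 ^ 2 / (2 * v) +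
        ((θ + θ0) / v + α / ν2) ^ 2 / (2 * U)))
      = fun θ0 : ℝ => Real.exp (-(W / 2) * θ0 ^ 2 + B * θ0 + C) := by
    funext θ0; rw [hexp θ0]
  rw [hfun]
  refine ⟨hgl.1, ?_⟩
  rw [hgl.2]
  congr 1
  · rw [show π / (W / 2) = 2 * π / W by ring]
  · congr 1
    rw [hC]
    have hWne : W ≠ 0 := ne_of_gt hWpos
    field_simp
    ring
end

section
/- For all v > 0, ν² > 0, α ∈ ℝ and θ ∈ ℝ, setting U = 2/v + 1/ν², W = n₀/σ₀² + 1/v − 1/(v²U), A = n/σ² + 1/v − 1/(v²U) − 1/((v²U)²W), B = nȳ/σ² + α/(vν²U) + (n₀ȳ₀/σ₀² + α/(vν²U))/(v²UW), and D = n₀ȳ₀/σ₀² + α/(vν²U), the iterated Gaussian integral over (θ₀, μ) converges and equals ∫_ℝ ∫_ℝ exp{−(n/(2σ²))(ȳ − θ)² − (n₀/(2σ₀²))(ȳ₀ − θ₀)² − ((θ − μ)² + (θ₀ − μ)²)/(2v) − (μ − α)²/(2ν²)} dθ₀ dμ = 2π U^{−1/2} W^{−1/2} · exp{α²/(2ν⁴U)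 − α²/(2ν²) + D²/(2W) − n₀ȳ₀²/(2σ₀²) − nȳ²/(2σ²)} · exp{−(1/2)(Aθ² − 2Bθ)}. -/
set_option maxHeartbeats 1000000


open MeasureTheory Real

lemma gauss_int (a b c : ℝ) (ha : 0 < a) :
    Integrable (fun x : ℝ => Real.exp (-(a/2) * x^2 + b*x + c)) ∧
    (∫ x : ℝ, Real.exp (-(a/2) * x^2 + b*x + c))
      = Real.sqrt (2*π/a) * Real.exp (b^2/(2*a) + c) := by
  have ha2 : (0:ℝ) < a/2 := by linarith
  have hane : a ≠ 0 := ne_of_gt ha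
  have key : (fun x : ℝ => Real.exp (-(a/2)*x^2 + b*x + c))
      = (fun x : ℝ => Real.exp (b^2/(2*a) + c) * Real.exp (-(a/2) * (x - b/a)^2)) := by
    funext x
    rw [← Real.exp_add]
    congr 1
    field_simp
    ring
  constructor
  · rw [key]
    exact ((integrable_exp_neg_mul_sq ha2).comp_sub_right (b/a)).const_mul _
  · rw [key, integral_const_mul,
      integral_sub_right_eq_self (fun y => Real.exp (-(a/2)*y^2)) (b/a),
      integral_gaussian]
    rw [show π / (a/2) = 2*π/a by ring]
    ring

lemma exponent_identity (σ2 σ02 n n0 : ℝ) (hσ2 : 0 < σ2) (hσ02 : 0 < σ02) (hn0 : 0 < n0)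
    (ybar ybar0 : ℝ) (v ν2 : ℝ) (hv : 0 < v) (hν2 : 0 < ν2) (α θ : ℝ)
    (U W A B D a0 a1 : ℝ)
    (hU : U = 2 / v + 1 / ν2)
    (hW : W = n0 / σ02 + 1 / v - 1 / (v ^ 2 * U))
    (hA : A = n / σ2 + 1 / v - 1 / (v ^ 2 * U) - 1 / ((v ^ 2 * U) ^ 2 * W))
    (hB : B = n * ybar / σ2 + α / (v * ν2 * U) +
      (n0 * ybar0 / σ02 + α / (v * ν2 * U)) / (v ^ 2 * U * W))
    (hD : D = n0 * ybar0 / σ02 + α / (v * ν2 * U))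
    (ha0 : a0 = n0 / σ02 + 1 / v)
    (ha1 : a1 = U - 1 / (a0 * v ^ 2)) :
    (n0 * ybar0 / (σ02 * (a0 * v)) + θ / v + α / ν2) ^ 2 / (2 * a1) +
      ((n0 * ybar0 / σ02) ^ 2 / (2 * a0) - n / (2 * σ2) * (ybar - θ) ^ 2
      - n0 * ybar0 ^ 2 / (2 * σ02) - θ ^ 2 / (2 * v) - α ^ 2 / (2 * ν2)) =
      (α ^ 2 / (2 * ν2 ^ 2 * U) - α ^ 2 / (2 * ν2) + D ^ 2 / (2 * W) -
        n0 * ybar0 ^ 2 / (2 * σ02) - n * ybar ^ 2 / (2 * σ2)) +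
      (-(1 / 2) * (A * θ ^ 2 - 2 * B * θ)) := by
  have hvne : v ≠ 0 := hv.ne'
  have hν2ne : ν2 ≠ 0 := hν2.ne'
  have hσ2ne : σ2 ≠ 0 := hσ2.ne'
  have hσ02ne : σ02 ≠ 0 := hσ02.ne'
  have hUpos : 0 < U := by rw [hU]; positivity
  have hUne : U ≠ 0 := hUpos.ne'
  have ha0pos : 0 < a0 := by rw [ha0]; positivity
  have ha0ne : a0 ≠ 0 := ha0pos.ne'
  have hWpos : 0 < W := by
    rw [hW, hU]
    have h1 : 1 / (v ^ 2 * (2 / v + 1 / ν2)) < 1 / v := by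
      apply one_div_lt_one_div_of_lt hv
      have h5 : v ^ 2 * (2 / v + 1 / ν2) = 2 * v + v ^ 2 / ν2 := by field_simp
      rw [h5]
      have : 0 < v ^ 2 / ν2 := by positivity
      linarith
    have h2 : 0 < n0 / σ02 := by positivity
    linarith
  have hWne : W ≠ 0 := hWpos.ne'
  have hW' : W = a0 - 1 / (v ^ 2 * U) := by rw [hW, ha0]
  have ha0' : a0 = W + 1 / (v ^ 2 * U) := by rw [hW']; ring
  have ha1' : a1 = U * W / a0 := by
    rw [ha1, hW']
    field_simp
  have ha1pos : 0 < a1 := by rw [ha1']; positivity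
  have ha1ne : a1 ≠ 0 := ha1pos.ne'
  have hE1 : 1 / (a1 * v ^ 2) = 1 / (v ^ 2 * U) + 1 / ((v ^ 2 * U) ^ 2 * W) := by
    rw [ha1', ha0']
    field_simp
  have hE2 : (n0 * ybar0 / (σ02 * (a0 * v)) + α / ν2) / (a1 * v) =
      α / (v * ν2 * U) + D / (v ^ 2 * U * W) := by
    rw [hD, ha1', ha0']
    field_simp
    ring
  have hE3 : (n0 * ybar0 / (σ02 * (a0 * v)) + α / ν2) ^ 2 / (2 * a1) =
      α ^ 2 / (2 * ν2 ^ 2 * U) + D ^ 2 / (2 * W) - (n0 * ybar0 / σ02) ^ 2 / (2 * a0) := by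
    rw [hD, ha1', ha0']
    field_simp
    ring
  rw [hA, hB]
  linear_combination hE3 + θ * hE2 + (θ ^ 2 / 2) * hE1 + (θ / (v ^ 2 * U * W)) * hD

/-- the iterated Gaussian integral over `(θ₀, μ)` in the Bayesian hierarchical
model converges and has the stated closed form. -/
theorem stmt_7 (σ2 σ02 n n0 : ℝ) (hσ2 : 0 < σ2) (hσ02 : 0 < σ02) (hn : 0 < n) (hn0 : 0 < n0)
    (ybar ybar0 : ℝ) (v ν2 : ℝ) (hv : 0 < v) (hν2 : 0 < ν2) (α θ : ℝ)
    (U W A B D : ℝ)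
    (hU : U = 2 / v + 1 / ν2)
    (hW : W = n0 / σ02 + 1 / v - 1 / (v ^ 2 * U))
    (hA : A = n / σ2 + 1 / v - 1 / (v ^ 2 * U) - 1 / ((v ^ 2 * U) ^ 2 * W))
    (hB : B = n * ybar / σ2 + α / (v * ν2 * U) +
      (n0 * ybar0 / σ02 + α / (v * ν2 * U)) / (v ^ 2 * U * W))
    (hD : D = n0 * ybar0 / σ02 + α / (v * ν2 * U)) :
    (∀ μ : ℝ, Integrable (fun θ0 : ℝ =>
      Real.exp (-(n / (2 * σ2)) * (ybar - θ) ^ 2 - (n0 / (2 * σ02)) * (ybar0 - θ0) ^ 2 -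
        ((θ - μ) ^ 2 + (θ0 - μ) ^ 2) / (2 * v) - (μ - α) ^ 2 / (2 * ν2)))) ∧
    Integrable (fun μ : ℝ => ∫ θ0 : ℝ,
      Real.exp (-(n / (2 * σ2)) * (ybar - θ) ^ 2 - (n0 / (2 * σ02)) * (ybar0 - θ0) ^ 2 -
        ((θ - μ) ^ 2 + (θ0 - μ) ^ 2) / (2 * v) - (μ - α) ^ 2 / (2 * ν2))) ∧
    (∫ μ : ℝ, ∫ θ0 : ℝ,
        Real.exp (-(n / (2 * σ2)) * (ybar - θ) ^ 2 - (n0 / (2 * σ02)) * (ybar0 - θ0) ^ 2 -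
          ((θ - μ) ^ 2 + (θ0 - μ) ^ 2) / (2 * v) - (μ - α) ^ 2 / (2 * ν2))) =
      2 * π * (Real.sqrt U)⁻¹ * (Real.sqrt W)⁻¹ *
        Real.exp (α ^ 2 / (2 * ν2 ^ 2 * U) - α ^ 2 / (2 * ν2) + D ^ 2 / (2 * W) -
          n0 * ybar0 ^ 2 / (2 * σ02) - n * ybar ^ 2 / (2 * σ2)) *
        Real.exp (-(1 / 2) * (A * θ ^ 2 - 2 * B * θ)) := by
  have hvne : v ≠ 0 := hv.ne'
  have hν2ne : ν2 ≠ 0 := hν2.ne'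
  have hσ2ne : σ2 ≠ 0 := hσ2.ne'
  have hσ02ne : σ02 ≠ 0 := hσ02.ne'
  have ha0pos : (0:ℝ) < n0 / σ02 + 1 / v := by positivity
  have ha0ne : n0 / σ02 + 1 / v ≠ 0 := ha0pos.ne'
  have hA1pos : (0:ℝ) < 2 / v + 1 / ν2 - 1 / ((n0 / σ02 + 1 / v) * v ^ 2) := by
    have h1 : 1 / ((n0 / σ02 + 1 / v) * v ^ 2) < 1 / v := by
      apply one_div_lt_one_div_of_lt hv
      have h3 : 0 < n0 / σ02 * v ^ 2 := by positivity
      have h4 : (n0 / σ02 + 1 / v) * v ^ 2 = n0 / σ02 * v ^ 2 + v := by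
        field_simp
      rw [h4]; linarith
    have h2 : (0:ℝ) < 1 / ν2 := by positivity
    have h5 : (0:ℝ) < 1 / v := by positivity
    have h6 : (2:ℝ) / v = 1 / v + 1 / v := by ring
    linarith
  have hUpos : 0 < U := by rw [hU]; positivity
  have hWpos : 0 < W := by
    rw [hW, hU]
    have h1 : 1 / (v ^ 2 * (2 / v + 1 / ν2)) < 1 / v := by
      apply one_div_lt_one_div_of_lt hv
      have h5 : v ^ 2 * (2 / v + 1 / ν2) = 2 * v + v ^ 2 / ν2 := by field_simp
      rw [h5]
      have : 0 < v ^ 2 / ν2 := by positivity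
      linarith
    have h2 : 0 < n0 / σ02 := by positivity
    linarith
  -- abbreviations (as plain terms)
  -- A0 = n0 / σ02 + 1 / v ; A1 = 2/v + 1/ν2 - 1/(A0 v²)
  -- B1, C1 as below
  have inner_eq : ∀ μ : ℝ, (fun θ0 : ℝ =>
      Real.exp (-(n / (2 * σ2)) * (ybar - θ) ^ 2 - (n0 / (2 * σ02)) * (ybar0 - θ0) ^ 2 -
        ((θ - μ) ^ 2 + (θ0 - μ) ^ 2) / (2 * v) - (μ - α) ^ 2 / (2 * ν2))) =
      (fun θ0 : ℝ => Real.exp (-((n0 / σ02 + 1 / v)/2) * θ0^2 + (n0 * ybar0 / σ02 + μ / v) * θ0 +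
        ((-((2 / v + 1 / ν2 - 1 / ((n0 / σ02 + 1 / v) * v ^ 2))/2) * μ^2 +
          (n0 * ybar0 / (σ02 * ((n0 / σ02 + 1 / v) * v)) + θ / v + α / ν2) * μ +
          ((n0 * ybar0 / σ02) ^ 2 / (2 * (n0 / σ02 + 1 / v)) - n / (2 * σ2) * (ybar - θ) ^ 2
            - n0 * ybar0 ^ 2 / (2 * σ02) - θ ^ 2 / (2 * v) - α ^ 2 / (2 * ν2)))
          - (n0 * ybar0 / σ02 + μ / v) ^ 2 / (2 * (n0 / σ02 + 1 / v))))) := by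
    intro μ
    funext θ0
    congr 1
    field_simp
    ring
  have outer_eq : (fun μ : ℝ => ∫ θ0 : ℝ,
      Real.exp (-(n / (2 * σ2)) * (ybar - θ) ^ 2 - (n0 / (2 * σ02)) * (ybar0 - θ0) ^ 2 -
        ((θ - μ) ^ 2 + (θ0 - μ) ^ 2) / (2 * v) - (μ - α) ^ 2 / (2 * ν2))) =
      (fun μ : ℝ => Real.sqrt (2 * π / (n0 / σ02 + 1 / v)) *
        Real.exp (-((2 / v + 1 / ν2 - 1 / ((n0 / σ02 + 1 / v) * v ^ 2))/2) * μ^2 +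
          (n0 * ybar0 / (σ02 * ((n0 / σ02 + 1 / v) * v)) + θ / v + α / ν2) * μ +
          ((n0 * ybar0 / σ02) ^ 2 / (2 * (n0 / σ02 + 1 / v)) - n / (2 * σ2) * (ybar - θ) ^ 2
            - n0 * ybar0 ^ 2 / (2 * σ02) - θ ^ 2 / (2 * v) - α ^ 2 / (2 * ν2)))) := by
    funext μ
    rw [inner_eq μ, (gauss_int _ _ _ ha0pos).2]
    congr 1
    ring
  refine ⟨fun μ => ?_, ?_, ?_⟩
  · rw [inner_eq μ]
    exact (gauss_int _ _ _ ha0pos).1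
  · rw [outer_eq]
    exact ((gauss_int _ _ _ hA1pos).1).const_mul _
  · rw [outer_eq, integral_const_mul, (gauss_int _ _ _ hA1pos).2]
    have hexp := exponent_identity σ2 σ02 n n0 hσ2 hσ02 hn0 ybar ybar0 v ν2 hv hν2 α θ
      U W A B D (n0 / σ02 + 1 / v)
      (2 / v + 1 / ν2 - 1 / ((n0 / σ02 + 1 / v) * v ^ 2))
      hU hW hA hB hD rfl (by rw [hU])
    have hprod : (n0 / σ02 + 1 / v) *
        (2 / v + 1 / ν2 - 1 / ((n0 / σ02 + 1 / v) * v ^ 2)) = U * W := by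
      have hUne : U ≠ 0 := hUpos.ne'
      rw [← hU, hW]
      field_simp
    have hsqrt : Real.sqrt (2 * π / (n0 / σ02 + 1 / v)) *
        Real.sqrt (2 * π / (2 / v + 1 / ν2 - 1 / ((n0 / σ02 + 1 / v) * v ^ 2))) =
        2 * π * (Real.sqrt U)⁻¹ * (Real.sqrt W)⁻¹ := by
      rw [← Real.sqrt_mul (by positivity)]
      have e1 : 2 * π / (n0 / σ02 + 1 / v) *
          (2 * π / (2 / v + 1 / ν2 - 1 / ((n0 / σ02 + 1 / v) * v ^ 2))) =
          (2 * π) ^ 2 / (U * W) := by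
        rw [div_mul_div_comm, hprod]
        ring
      rw [e1, Real.sqrt_div (by positivity), Real.sqrt_sq (by positivity),
        Real.sqrt_mul hUpos.le]
      field_simp
    rw [hexp]
    rw [mul_assoc (2 * π * (Real.sqrt U)⁻¹ * (Real.sqrt W)⁻¹), ← Real.exp_add, ← hsqrt]
    ring
end

section
/- Fix v > 0 and set α = 0. For ν² > 0 define U(ν²) = 2/v + 1/ν², W(ν²) = n₀/σ₀² + 1/v − 1/(v²U(ν²)), A(ν²) = n/σ² + 1/v − 1/(v²U(ν²)) − 1/((v²U(ν²))²W(ν²)), and B(ν²) = nȳ/σ² + (n₀ȳ₀/σ₀²)/(v²U(ν²)W(ν²)). Then, as ν² → ∞, A(ν²) → n/σ² + f(v)·n₀/σ₀² and B(ν²) → nȳ/σ² + f(v)·n₀ȳ₀/σ₀², where f(v) = (1 + 2vn₀/σ₀²)⁻¹. -/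
open Real Filter

/-- the vague-hyperprior limit `ν² → ∞` (with `α = 0`) of the precision
`A(ν²)` and linear coefficient `B(ν²)` of the conditional posterior of `θ` given `v`
in the Bayesian hierarchical model. -/
theorem stmt_8 (σ2 σ02 n n0 : ℝ) (hσ2 : 0 < σ2) (hσ02 : 0 < σ02) (hn : 0 < n) (hn0 : 0 < n0)
    (ybar ybar0 : ℝ) (v : ℝ) (hv : 0 < v)
    (U W A B : ℝ → ℝ)
    (hU : ∀ ν2 > 0, U ν2 = 2 / v + 1 / ν2)
    (hW : ∀ ν2 > 0, W ν2 = n0 / σ02 + 1 / v - 1 / (v ^ 2 * U ν2))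
    (hA : ∀ ν2 > 0, A ν2 = n / σ2 + 1 / v - 1 / (v ^ 2 * U ν2) -
      1 / ((v ^ 2 * U ν2) ^ 2 * W ν2))
    (hB : ∀ ν2 > 0, B ν2 = n * ybar / σ2 + (n0 * ybar0 / σ02) / (v ^ 2 * U ν2 * W ν2))
    (f : ℝ → ℝ) (hf : ∀ w, f w = (1 + 2 * w * n0 / σ02)⁻¹) :
    Tendsto A atTop (nhds (n / σ2 + f v * (n0 / σ02))) ∧
    Tendsto B atTop (nhds (n * ybar / σ2 + f v * (n0 * ybar0 / σ02))) := by
  have hv' : v ≠ 0 := ne_of_gt hv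
  have hpos : (0:ℝ) < 1 := one_pos
  have hev : ∀ᶠ ν2 in atTop, (0:ℝ) < ν2 := eventually_gt_atTop 0
  -- limit of U
  have TU : Tendsto U atTop (nhds (2 / v)) := by
    have h1 : Tendsto (fun ν2 : ℝ => 2 / v + 1 / ν2) atTop (nhds (2 / v + 0)) := by
      have h0 : Tendsto (fun ν2 : ℝ => 1 / ν2) atTop (nhds 0) := by
        simpa [one_div] using (tendsto_inv_atTop_zero : Tendsto (fun x : ℝ => x⁻¹) atTop (nhds 0))
      exact tendsto_const_nhds.add h0
    rw [add_zero] at h1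
    exact h1.congr' (hev.mono fun ν2 h => (hU ν2 h).symm)
  -- limit of D := v^2 * U
  have TD : Tendsto (fun ν2 => v ^ 2 * U ν2) atTop (nhds (2 * v)) := by
    have := TU.const_mul (v ^ 2)
    have h2 : v ^ 2 * (2 / v) = 2 * v := by field_simp
    rwa [h2] at this
  have hD : (2 : ℝ) * v ≠ 0 := by positivity
  -- limit of W
  set W0 : ℝ := n0 / σ02 + 1 / v - 1 / (2 * v) with hW0
  have TW : Tendsto W atTop (nhds W0) := by
    have h1 : Tendsto (fun ν2 => n0 / σ02 + 1 / v - 1 / (v ^ 2 * U ν2)) atTop (nhds W0) := by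
      exact tendsto_const_nhds.sub (tendsto_const_nhds.div TD hD)
    exact h1.congr' (hev.mono fun ν2 h => (hW ν2 h).symm)
  have hW0pos : 0 < W0 := by
    rw [hW0]
    have : n0 / σ02 + 1 / v - 1 / (2 * v) = n0 / σ02 + 1 / (2 * v) := by
      field_simp; ring
    rw [this]; positivity
  have hW0ne : W0 ≠ 0 := ne_of_gt hW0pos
  have hW0' : W0 = (σ02 + 2 * v * n0) / (2 * v * σ02) := by
    rw [hW0]; field_simp; ring
  constructor
  · -- A
    have TA : Tendsto (fun ν2 => n / σ2 + 1 / v - 1 / (v ^ 2 * U ν2) -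
        1 / ((v ^ 2 * U ν2) ^ 2 * W ν2)) atTop
        (nhds (n / σ2 + 1 / v - 1 / (2 * v) - 1 / ((2 * v) ^ 2 * W0))) := by
      refine Tendsto.sub ?_ ?_
      · exact tendsto_const_nhds.sub (tendsto_const_nhds.div TD hD)
      · refine tendsto_const_nhds.div ((TD.pow 2).mul TW) ?_
        exact mul_ne_zero (pow_ne_zero 2 hD) hW0ne
    have hval : n / σ2 + 1 / v - 1 / (2 * v) - 1 / ((2 * v) ^ 2 * W0)
        = n / σ2 + f v * (n0 / σ02) := by
      rw [hf, hW0']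
      have hs : σ02 + 2 * v * n0 ≠ 0 := by positivity
      field_simp
      ring
    rw [← hval]
    exact TA.congr' (hev.mono fun ν2 h => (hA ν2 h).symm)
  · -- B
    have TB : Tendsto (fun ν2 => n * ybar / σ2 + (n0 * ybar0 / σ02) / (v ^ 2 * U ν2 * W ν2))
        atTop (nhds (n * ybar / σ2 + (n0 * ybar0 / σ02) / (2 * v * W0))) := by
      refine tendsto_const_nhds.add (tendsto_const_nhds.div (TD.mul TW) ?_)
      exact mul_ne_zero hD hW0ne
    have hval : n * ybar / σ2 + (n0 * ybar0 / σ02) / (2 * v * W0)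
        = n * ybar / σ2 + f v * (n0 * ybar0 / σ02) := by
      rw [hf, hW0']
      have hs : σ02 + 2 * v * n0 ≠ 0 := by positivity
      field_simp
    rw [← hval]
    exact TB.congr' (hev.mono fun ν2 h => (hB ν2 h).symm)
end

section
/- For every v > 0 and θ ∈ ℝ, set a₀ = f(v), a₀ₖ = cₖ(v)f(v), C(v) = Σₖ cₖ(v)n₀ₖ/σ₀ₖ², Q(v) = exp{−(f(v)/(2C(v)))(Σₖ cₖ(v)Yₖ)²}(f(v)C(v))^{1/2}, σ_p² = (n/σ² + f(v)C(v))⁻¹, μ_p = σ_p²(nȳ/σ² + f(v)Σₖ cₖ(v)Yₖ), and c(v) = ∫_ℝ Πₖ exp{−(a₀ₖ/(2σ₀ₖ²))(S₀ₖ + n₀ₖ(ȳ₀ₖ − t)²)} dt. Then the following exact identity holds: exp{−(n/(2σ²))(ȳ − θ)²} · Πₖ exp{−(a₀ₖ/(2σ₀ₖ²))(S₀ₖ + n₀ₖ(ȳ₀ₖ − θ)²)} / c(v) = (2π)^{−1/2} · Q(v) · exp{−(θ − μ_p)²/(2σ_p²)} · exp{μ_p²/(2σ_p²) − nȳ²/(2σ²)}.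 -/
open MeasureTheory Real

/-- the conditional joint density factorization of the BHM-matching
normalized power prior (BNPP) for `K` historical normal datasets. -/
theorem stmt_11 (K : ℕ) (hK : 1 ≤ K)
    (σ2 n : ℝ) (hσ2 : 0 < σ2) (hn : 0 < n) (ybar : ℝ)
    (σ02 n0 ybar0 S0 : Fin K → ℝ)
    (hσ02 : ∀ k, 0 < σ02 k) (hn0 : ∀ k, 0 < n0 k) (hS0 : ∀ k, 0 ≤ S0 k)
    (N : ℝ → Fin K → ℝ)
    (hN : ∀ v > (0 : ℝ), ∀ k, N v k = (n0 k / σ02 k + 1 / v)⁻¹)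
    (ck : ℝ → Fin K → ℝ)
    (hck : ∀ v > (0 : ℝ), ∀ k, ck v k = (1 + n0 k * v / σ02 k)⁻¹)
    (f : ℝ → ℝ)
    (hf : ∀ v > (0 : ℝ), f v = (1 + ∑ k, (n0 k / σ02 k) * N v k)⁻¹)
    (Y : Fin K → ℝ) (hY : ∀ k, Y k = n0 k * ybar0 k / σ02 k)
    (Cf Q σp2 μp cnorm : ℝ → ℝ)
    (hCf : ∀ v > (0 : ℝ), Cf v = ∑ k, ck v k * n0 k / σ02 k)
    (hQ : ∀ v > (0 : ℝ), Q v =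
      Real.exp (-(f v / (2 * Cf v)) * (∑ k, ck v k * Y k) ^ 2) * Real.sqrt (f v * Cf v))
    (hσp2 : ∀ v > (0 : ℝ), σp2 v = (n / σ2 + f v * Cf v)⁻¹)
    (hμp : ∀ v > (0 : ℝ), μp v = σp2 v * (n * ybar / σ2 + f v * ∑ k, ck v k * Y k))
    (hcnorm : ∀ v > (0 : ℝ), cnorm v = ∫ t : ℝ,
      ∏ k, Real.exp (-(ck v k * f v / (2 * σ02 k)) * (S0 k + n0 k * (ybar0 k - t) ^ 2))) :
    ∀ v > (0 : ℝ), ∀ θ : ℝ,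
      Real.exp (-(n / (2 * σ2)) * (ybar - θ) ^ 2) *
        (∏ k, Real.exp (-(ck v k * f v / (2 * σ02 k)) *
          (S0 k + n0 k * (ybar0 k - θ) ^ 2))) / cnorm v =
      (Real.sqrt (2 * π))⁻¹ * Q v * Real.exp (-(θ - μp v) ^ 2 / (2 * σp2 v)) *
        Real.exp (μp v ^ 2 / (2 * σp2 v) - n * ybar ^ 2 / (2 * σ2)) := by
  intro v hv θ
  have hckpos : ∀ k, 0 < ck v k := by
    intro k
    rw [hck v hv k]
    have h1 : 0 < n0 k * v / σ02 k := div_pos (mul_pos (hn0 k) hv) (hσ02 k)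
    exact inv_pos.mpr (by linarith)
  have hfpos : 0 < f v := by
    rw [hf v hv]
    have hs : 0 ≤ ∑ k, (n0 k / σ02 k) * N v k := by
      refine Finset.sum_nonneg fun k _ => ?_
      rw [hN v hv k]
      have h1 : 0 < n0 k / σ02 k + 1 / v :=
        add_pos (div_pos (hn0 k) (hσ02 k)) (div_pos one_pos hv)
      exact mul_nonneg (div_pos (hn0 k) (hσ02 k)).le (inv_pos.mpr h1).le
    exact inv_pos.mpr (by linarith)
  have hCfpos : 0 < Cf v := by
    rw [hCf v hv]
    refine Finset.sum_pos (fun k _ => div_pos (mul_pos (hckpos k) (hn0 k)) (hσ02 k)) ?_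
    exact Finset.univ_nonempty_iff.mpr (Fin.pos_iff_nonempty.mp hK)
  set A : ℝ := f v * Cf v with hA
  have hApos : 0 < A := mul_pos hfpos hCfpos
  set B : ℝ := f v * ∑ k, ck v k * Y k with hB
  set C0 : ℝ := ∑ k, ck v k * f v / (2 * σ02 k) * S0 k with hC0
  set D : ℝ := ∑ k, ck v k * f v * n0 k / σ02 k * ybar0 k ^ 2 with hD
  have hAsum : A = ∑ k, ck v k * f v * n0 k / σ02 k := by
    rw [hA, hCf v hv, Finset.mul_sum]
    exact Finset.sum_congr rfl fun k _ => by ring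
  have hBsum : B = ∑ k, ck v k * f v * n0 k / σ02 k * ybar0 k := by
    rw [hB, Finset.mul_sum]
    refine Finset.sum_congr rfl fun k _ => ?_
    rw [hY k]; ring
  -- pointwise sum identity
  have hsum : ∀ t : ℝ,
      (∑ k, -(ck v k * f v / (2 * σ02 k)) * (S0 k + n0 k * (ybar0 k - t) ^ 2))
        = -C0 - D / 2 - A / 2 * t ^ 2 + B * t := by
    intro t
    have step : ∀ k : Fin K,
        -(ck v k * f v / (2 * σ02 k)) * (S0 k + n0 k * (ybar0 k - t) ^ 2)
          = -(ck v k * f v / (2 * σ02 k) * S0 k)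
            - (ck v k * f v * n0 k / σ02 k * ybar0 k ^ 2) / 2
            - (ck v k * f v * n0 k / σ02 k) / 2 * t ^ 2
            + (ck v k * f v * n0 k / σ02 k * ybar0 k) * t := by
      intro k
      have h1 : σ02 k ≠ 0 := (hσ02 k).ne'
      field_simp
      ring
    calc (∑ k, -(ck v k * f v / (2 * σ02 k)) * (S0 k + n0 k * (ybar0 k - t) ^ 2))
        = ∑ k, (-(ck v k * f v / (2 * σ02 k) * S0 k)
            - (ck v k * f v * n0 k / σ02 k * ybar0 k ^ 2) / 2
            - (ck v k * f v * n0 k / σ02 k) / 2 * t ^ 2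
            + (ck v k * f v * n0 k / σ02 k * ybar0 k) * t) :=
          Finset.sum_congr rfl fun k _ => step k
      _ = -C0 - D / 2 - A / 2 * t ^ 2 + B * t := by
          rw [hAsum, hBsum, hC0, hD]
          simp only [Finset.sum_add_distrib, Finset.sum_sub_distrib, Finset.sum_neg_distrib,
            Finset.sum_div, Finset.sum_mul]
  have hA0 : A ≠ 0 := hApos.ne'
  have hprod : ∀ t : ℝ,
      (∏ k, Real.exp (-(ck v k * f v / (2 * σ02 k)) * (S0 k + n0 k * (ybar0 k - t) ^ 2)))
        = Real.exp (-C0 - (D - B ^ 2 / A) / 2) * Real.exp (-(A / 2) * (t - B / A) ^ 2) := by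
    intro t
    rw [← Real.exp_sum, ← Real.exp_add, hsum t]
    congr 1
    field_simp
    ring
  -- compute the normalizing integral
  have hc : cnorm v = Real.exp (-C0 - (D - B ^ 2 / A) / 2) * Real.sqrt (2 * π / A) := by
    rw [hcnorm v hv]
    calc (∫ t : ℝ, ∏ k, Real.exp (-(ck v k * f v / (2 * σ02 k)) * (S0 k + n0 k * (ybar0 k - t) ^ 2)))
        = ∫ t : ℝ, Real.exp (-C0 - (D - B ^ 2 / A) / 2) * Real.exp (-(A / 2) * (t - B / A) ^ 2) :=
          integral_congr_ae (Filter.Eventually.of_forall hprod)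
      _ = Real.exp (-C0 - (D - B ^ 2 / A) / 2) * ∫ t : ℝ, Real.exp (-(A / 2) * (t - B / A) ^ 2) :=
          integral_const_mul _ _
      _ = Real.exp (-C0 - (D - B ^ 2 / A) / 2) * Real.sqrt (2 * π / A) := by
          rw [MeasureTheory.integral_sub_right_eq_self
            (fun x => Real.exp (-(A / 2) * x ^ 2)) (B / A), integral_gaussian]
          congr 2
          rw [div_div_eq_mul_div]
          ring
  have hE : Real.exp (-C0 - (D - B ^ 2 / A) / 2) ≠ 0 := Real.exp_ne_zero _
  have hσp2pos : 0 < σp2 v := by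
    rw [hσp2 v hv]
    exact inv_pos.mpr (add_pos (div_pos hn hσ2) hApos)
  have hsA : 0 < Real.sqrt A := Real.sqrt_pos.mpr hApos
  have hs2π : 0 < Real.sqrt (2 * π) := Real.sqrt_pos.mpr (by positivity)
  -- the main exponent identity
  have hkey : -(n / (2 * σ2)) * (ybar - θ) ^ 2 + (-(A / 2) * (θ - B / A) ^ 2) =
      -(f v / (2 * Cf v)) * (∑ k, ck v k * Y k) ^ 2 +
      (-(θ - μp v) ^ 2 / (2 * σp2 v)) + (μp v ^ 2 / (2 * σp2 v) - n * ybar ^ 2 / (2 * σ2)) := by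
    have h1 : σp2 v = (n / σ2 + A)⁻¹ := by rw [hσp2 v hv]
    have hden : (0:ℝ) < n / σ2 + A := add_pos (div_pos hn hσ2) hApos
    have h2 : μp v = (n / σ2 + A)⁻¹ * (n * ybar / σ2 + B) := by
      rw [hμp v hv, h1, hB]
    have hq : -(f v / (2 * Cf v)) * (∑ k, ck v k * Y k) ^ 2 = -(B ^ 2 / A) / 2 := by
      rw [hB, hA]
      field_simp
    rw [hq, h1, h2]
    field_simp
    ring
  -- assemble
  rw [hprod θ, hc, hQ v hv]
  rw [Real.sqrt_div (by positivity : (0:ℝ) ≤ 2 * π) A]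
  have hAeq : Real.sqrt (f v * Cf v) = Real.sqrt A := by rw [hA]
  rw [hAeq]
  rw [div_eq_iff (mul_ne_zero hE (div_pos hs2π hsA).ne')]
  calc Real.exp (-(n / (2 * σ2)) * (ybar - θ) ^ 2) *
        (Real.exp (-C0 - (D - B ^ 2 / A) / 2) * Real.exp (-(A / 2) * (θ - B / A) ^ 2))
      = Real.exp (-(n / (2 * σ2)) * (ybar - θ) ^ 2 + (-(A / 2) * (θ - B / A) ^ 2)) *
        Real.exp (-C0 - (D - B ^ 2 / A) / 2) := by
        rw [Real.exp_add]; ring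
    _ = _ := by
        rw [hkey, Real.exp_add, Real.exp_add]
        field_simp
end

section
/- For every v > 0 and θ ∈ ℝ, set σ_b² = (n/σ² + 1/v − 1/(v²A(v)))⁻¹ and μ_b = σ_b² · (nȳ/σ² + (Σₖ Nₖ(v)Yₖ)/(v²A(v))), and R(v) = v^{−(K+1)/2} Πₖ Nₖ(v)^{1/2} A(v)^{−1/2} exp{(Σₖ YₖNₖ(v))²/(2v²A(v))} exp{(1/2)Σₖ Yₖ²Nₖ(v)}. Then n/σ² + 1/v − 1/(v²A(v)) > 0 and the following exact identity holds: v^{−(K+1)/2} ∫_ℝ ∫_{ℝᴷ} exp{−(n/(2σ²))(ȳ − θ)² − (1/2)Σₖ (n₀ₖ/σ₀ₖ²)(ȳ₀ₖ − θ₀ₖ)² − (θ − μ)²/(2v) − (1/(2v))Σₖ(θ₀ₖ − μ)²} dθ₀ dμ = (2π)^{(K+1)/2} · exp{−(1/2)Σₖ n₀ₖȳ₀ₖ²/σ₀ₖ² − nȳ²/(2σ²)} · R(v) · exp{−(θ − μ_b)²/(2σ_b²)} · exp{μ_b²/(2σ_b²)}. -/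
/-!
Given μ, the integrand factorises over the historical means θ₀ₖ, each factor a Gaussian in θ₀ₖ
with precision n₀ₖ/σ₀ₖ² + 1/v = 1/Nₖ(v). Integrating them out leaves a Gaussian in μ whose
precision is A(v), and integrating μ leaves an exponent quadratic in θ; completing its square
produces σ_b² and μ_b. Since Nₖ(v) ≤ v, we get v²A(v) = (1 + K)v − Σₖ Nₖ(v) ≥ v, hence
1/(v²A(v)) ≤ 1/v, which makes both A(v) and 1/σ_b² positive.
-/

open MeasureTheory Real Finset

theorem integral_exp_quadratic {p : ℝ} (hp : 0 < p) (m c : ℝ) :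
    ∫ x : ℝ, exp (-(p / 2) * x ^ 2 + m * x + c) =
      √(2 * π) / √p * exp (m ^ 2 / (2 * p) + c) := by
  have hsq (x : ℝ) : -(p / 2) * x ^ 2 + m * x + c =
      -(p / 2) * (x - m / p) ^ 2 + (m ^ 2 / (2 * p) + c) := by
    field_simp; ring
  have hπ : π / (p / 2) = 2 * π / p := by field_simp
  simp_rw [hsq, exp_add]
  rw [integral_mul_const, integral_sub_right_eq_self (fun x => exp (-(p / 2) * x ^ 2)),
    integral_gaussian, hπ, sqrt_div (by positivity)]

theorem integral_pi_exp_sum {ι : Type*} [Fintype ι] (f : ι → ℝ → ℝ) :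
    ∫ x : ι → ℝ, exp (∑ i, f i (x i)) = ∏ i, ∫ t, exp (f i t) := by
  simp_rw [exp_sum]
  exact integral_fintype_prod_volume_eq_prod fun i t => exp (f i t)

section Hierarchical

variable {ι : Type*} [Fintype ι] {a y N : ι → ℝ} {v : ℝ}

theorem sum_mul_add_div_sq {Y : ι → ℝ} (μ : ℝ) :
    ∑ i, (N i * (Y i + μ / v) ^ 2 / 2 - μ ^ 2 / (2 * v)) =
      -((Fintype.card ι / v - (∑ i, N i) / v ^ 2) / 2) * μ ^ 2 +
        (∑ i, N i * Y i) / v * μ + (∑ i, N i * Y i ^ 2) / 2 := by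
  have hterm (i : ι) : N i * (Y i + μ / v) ^ 2 / 2 - μ ^ 2 / (2 * v) =
      N i * Y i ^ 2 * (1 / 2) + N i * Y i * (μ / v) + N i * (μ ^ 2 / (2 * v ^ 2)) -
        μ ^ 2 / (2 * v) := by
    ring
  simp only [hterm, sum_add_distrib, sum_sub_distrib, ← sum_mul, sum_const, card_univ,
    nsmul_eq_mul]
  ring

theorem integral_exp_historical_means (hv : 0 < v) (ha : ∀ i, 0 ≤ a i)
    (hN : ∀ i, N i = (a i + 1 / v)⁻¹) (μ : ℝ) :
    ∫ t : ι → ℝ, exp (-(1 / 2) * ∑ i, a i * (y i - t i) ^ 2 - 1 / (2 * v) * ∑ i, (t i - μ) ^ 2) =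
      √(2 * π) ^ Fintype.card ι * (∏ i, √(N i)) *
        exp (-((Fintype.card ι / v - (∑ i, N i) / v ^ 2) / 2) * μ ^ 2 +
          (∑ i, N i * (a i * y i)) / v * μ + (∑ i, N i * (a i * y i) ^ 2) / 2 -
            (∑ i, a i * y i ^ 2) / 2) := by
  have hp (i : ι) : 0 < a i + 1 / v := by have := ha i; positivity
  have hexp (t : ι → ℝ) :
      -(1 / 2) * ∑ i, a i * (y i - t i) ^ 2 - 1 / (2 * v) * ∑ i, (t i - μ) ^ 2 =
        ∑ i, (-((a i + 1 / v) / 2) * t i ^ 2 + (a i * y i + μ / v) * t i +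
          (-(a i * y i ^ 2) / 2 - μ ^ 2 / (2 * v))) := by
    rw [mul_sum, mul_sum, ← sum_sub_distrib]
    exact sum_congr rfl fun i _ => by field_simp; ring
  have hfactor (i : ι) :
      √(2 * π) / √(a i + 1 / v) * exp ((a i * y i + μ / v) ^ 2 / (2 * (a i + 1 / v)) +
          (-(a i * y i ^ 2) / 2 - μ ^ 2 / (2 * v))) =
        √(2 * π) * √(N i) * exp ((N i * (a i * y i + μ / v) ^ 2 / 2 - μ ^ 2 / (2 * v)) -
          a i * y i ^ 2 / 2) := by
    rw [hN, sqrt_inv, div_eq_mul_inv]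
    congr 2
    field_simp
    ring
  simp_rw [hexp]
  rw [integral_pi_exp_sum (fun i x => -((a i + 1 / v) / 2) * x ^ 2 + (a i * y i + μ / v) * x +
      (-(a i * y i ^ 2) / 2 - μ ^ 2 / (2 * v)))]
  simp_rw [integral_exp_quadratic (hp _), hfactor]
  rw [prod_mul_distrib, prod_mul_distrib, prod_const, card_univ, ← exp_sum, sum_sub_distrib,
    sum_mul_add_div_sq, ← sum_div]

theorem le_sq_mul_of_eq_sub_sum (hv : 0 < v) (ha : ∀ i, 0 ≤ a i)
    (hN : ∀ i, N i = (a i + 1 / v)⁻¹) {A : ℝ}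
    (hA : A = (1 + Fintype.card ι) / v - (∑ i, N i) / v ^ 2) :
    v ≤ v ^ 2 * A := by
  have hNle (i : ι) : N i ≤ v := by
    calc N i = (a i + 1 / v)⁻¹ := hN i
      _ ≤ (1 / v)⁻¹ := inv_anti₀ (by positivity) (le_add_of_nonneg_left (ha i))
      _ = v := by rw [one_div, inv_inv]
  have hsum : ∑ i, N i ≤ Fintype.card ι * v := by
    simpa using sum_le_sum fun i (_ : i ∈ univ) => hNle i
  have hvA : v ^ 2 * A = (1 + Fintype.card ι) * v - ∑ i, N i := by
    rw [hA]; field_simp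
  linarith

theorem integral_integral_exp_hierarchical_s14 (hv : 0 < v) (ha : ∀ i, 0 ≤ a i)
    (hN : ∀ i, N i = (a i + 1 / v)⁻¹) {A : ℝ}
    (hA : A = (1 + Fintype.card ι) / v - (∑ i, N i) / v ^ 2) (c θ : ℝ) :
    ∫ μ : ℝ, ∫ t : ι → ℝ, exp (c - 1 / 2 * ∑ i, a i * (y i - t i) ^ 2 -
        (θ - μ) ^ 2 / (2 * v) - 1 / (2 * v) * ∑ i, (t i - μ) ^ 2) =
      √(2 * π) ^ (Fintype.card ι + 1) * (∏ i, √(N i)) * (√A)⁻¹ *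
        exp ((θ + ∑ i, N i * (a i * y i)) ^ 2 / (2 * v ^ 2 * A) +
          (c - θ ^ 2 / (2 * v) + (∑ i, N i * (a i * y i) ^ 2) / 2 - (∑ i, a i * y i ^ 2) / 2)) := by
  have hA_pos : 0 < A := by
    have := hv.trans_le (le_sq_mul_of_eq_sub_sum hv ha hN hA)
    exact pos_of_mul_pos_right this (by positivity)
  have hsplit (μ : ℝ) (t : ι → ℝ) :
      c - 1 / 2 * ∑ i, a i * (y i - t i) ^ 2 - (θ - μ) ^ 2 / (2 * v) -
          1 / (2 * v) * ∑ i, (t i - μ) ^ 2 =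
        (c - (θ - μ) ^ 2 / (2 * v)) +
          (-(1 / 2) * ∑ i, a i * (y i - t i) ^ 2 - 1 / (2 * v) * ∑ i, (t i - μ) ^ 2) := by
    ring
  have hquad (μ : ℝ) :
      exp (c - (θ - μ) ^ 2 / (2 * v)) *
          (√(2 * π) ^ Fintype.card ι * (∏ i, √(N i)) *
            exp (-((Fintype.card ι / v - (∑ i, N i) / v ^ 2) / 2) * μ ^ 2 +
              (∑ i, N i * (a i * y i)) / v * μ + (∑ i, N i * (a i * y i) ^ 2) / 2 -
                (∑ i, a i * y i ^ 2) / 2)) =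
        √(2 * π) ^ Fintype.card ι * (∏ i, √(N i)) *
          exp (-(A / 2) * μ ^ 2 + (θ + ∑ i, N i * (a i * y i)) / v * μ +
            (c - θ ^ 2 / (2 * v) + (∑ i, N i * (a i * y i) ^ 2) / 2 -
              (∑ i, a i * y i ^ 2) / 2)) := by
    rw [mul_left_comm, ← exp_add, hA]
    congr 2
    ring
  conv_lhs =>
    simp only [hsplit, exp_add, integral_const_mul, integral_exp_historical_means hv ha hN]
  simp only [hquad]
  rw [integral_const_mul, integral_exp_quadratic hA_pos,
    show ∀ x : ℝ, (x / v) ^ 2 / (2 * A) = x ^ 2 / (2 * v ^ 2 * A) from fun x => by ring,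
    pow_succ]
  ring

end Hierarchical

theorem neg_sq_sub_div_add_sq_div_eq {P : ℝ} (hP : P ≠ 0) (M θ : ℝ) :
    -(θ - P⁻¹ * M) ^ 2 / (2 * P⁻¹) + (P⁻¹ * M) ^ 2 / (2 * P⁻¹) = -(P / 2) * θ ^ 2 + M * θ := by
  field_simp
  ring

theorem exponent_eq_completed_square {v A σ2 n ybar θ S W U : ℝ} (hv : v ≠ 0) (hσ2 : σ2 ≠ 0)
    (hP : n / σ2 + 1 / v - 1 / (v ^ 2 * A) ≠ 0) :
    (θ + S) ^ 2 / (2 * v ^ 2 * A) +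
        (-(n / (2 * σ2)) * (ybar - θ) ^ 2 - θ ^ 2 / (2 * v) + W / 2 - U / 2) =
      (-(1 / 2) * U - n * ybar ^ 2 / (2 * σ2)) + S ^ 2 / (2 * v ^ 2 * A) + 1 / 2 * W +
        (-(θ - (n / σ2 + 1 / v - 1 / (v ^ 2 * A))⁻¹ * (n * ybar / σ2 + S / (v ^ 2 * A))) ^ 2 /
            (2 * (n / σ2 + 1 / v - 1 / (v ^ 2 * A))⁻¹) +
          ((n / σ2 + 1 / v - 1 / (v ^ 2 * A))⁻¹ * (n * ybar / σ2 + S / (v ^ 2 * A))) ^ 2 /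
            (2 * (n / σ2 + 1 / v - 1 / (v ^ 2 * A))⁻¹)) := by
  rw [neg_sq_sub_div_add_sq_div_eq hP]
  field_simp
  ring

theorem stmt_14_general (K : ℕ)
    (σ2 n : ℝ) (hσ2 : 0 < σ2) (hn : 0 < n) (ybar : ℝ)
    (σ02 n0 ybar0 : Fin K → ℝ)
    (hσ02 : ∀ k, 0 < σ02 k) (hn0 : ∀ k, 0 < n0 k)
    (N : ℝ → Fin K → ℝ)
    (hN : ∀ v > (0 : ℝ), ∀ k, N v k = (n0 k / σ02 k + 1 / v)⁻¹)
    (Y : Fin K → ℝ) (hY : ∀ k, Y k = n0 k * ybar0 k / σ02 k)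
    (A : ℝ → ℝ)
    (hA : ∀ v > (0 : ℝ), A v = (1 + K) / v - (∑ k, N v k) / v ^ 2)
    (σb2 μb R : ℝ → ℝ)
    (hσb2 : ∀ v > (0 : ℝ), σb2 v = (n / σ2 + 1 / v - 1 / (v ^ 2 * A v))⁻¹)
    (hμb : ∀ v > (0 : ℝ), μb v =
      σb2 v * (n * ybar / σ2 + (∑ k, N v k * Y k) / (v ^ 2 * A v)))
    (hR : ∀ v > (0 : ℝ), R v =
      v ^ (-(((K : ℝ) + 1) / 2)) * (∏ k, Real.sqrt (N v k)) * (Real.sqrt (A v))⁻¹ *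
        Real.exp ((∑ k, Y k * N v k) ^ 2 / (2 * v ^ 2 * A v)) *
        Real.exp ((1 / 2) * ∑ k, Y k ^ 2 * N v k)) :
    ∀ v > (0 : ℝ),
      0 < n / σ2 + 1 / v - 1 / (v ^ 2 * A v) ∧
      ∀ θ : ℝ,
        v ^ (-(((K : ℝ) + 1) / 2)) *
          (∫ μ : ℝ, ∫ θ0 : Fin K → ℝ,
            Real.exp (-(n / (2 * σ2)) * (ybar - θ) ^ 2 -
              (1 / 2) * ∑ k, (n0 k / σ02 k) * (ybar0 k - θ0 k) ^ 2 -
              (θ - μ) ^ 2 / (2 * v) - (1 / (2 * v)) * ∑ k, (θ0 k - μ) ^ 2)) =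
        (2 * π) ^ (((K : ℝ) + 1) / 2) *
          Real.exp (-(1 / 2) * (∑ k, n0 k * ybar0 k ^ 2 / σ02 k) -
            n * ybar ^ 2 / (2 * σ2)) *
          R v * Real.exp (-(θ - μb v) ^ 2 / (2 * σb2 v)) *
          Real.exp (μb v ^ 2 / (2 * σb2 v)) := by
  intro v hv
  have ha (k : Fin K) : 0 ≤ n0 k / σ02 k := (div_pos (hn0 k) (hσ02 k)).le
  have hA' : A v = (1 + Fintype.card (Fin K)) / v - (∑ k, N v k) / v ^ 2 := by
    simpa using hA v hv
  have hvA := le_sq_mul_of_eq_sub_sum hv ha (hN v hv) hA'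
  have hP : 0 < n / σ2 + 1 / v - 1 / (v ^ 2 * A v) := by
    have := one_div_le_one_div_of_le hv hvA
    have := div_pos hn hσ2
    linarith
  refine ⟨hP, fun θ => ?_⟩
  have hS : ∑ k, Y k * N v k = ∑ k, N v k * (n0 k / σ02 k * ybar0 k) :=
    sum_congr rfl fun k _ => by rw [hY]; ring
  have hS' : ∑ k, N v k * Y k = ∑ k, N v k * (n0 k / σ02 k * ybar0 k) :=
    sum_congr rfl fun k _ => by rw [hY]; ring
  have hW : ∑ k, Y k ^ 2 * N v k = ∑ k, N v k * (n0 k / σ02 k * ybar0 k) ^ 2 :=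
    sum_congr rfl fun k _ => by rw [hY]; ring
  have hU : ∑ k, n0 k * ybar0 k ^ 2 / σ02 k = ∑ k, n0 k / σ02 k * ybar0 k ^ 2 :=
    sum_congr rfl fun k _ => by ring
  have hI := integral_integral_exp_hierarchical_s14 (y := ybar0) hv ha (hN v hv) hA'
    (-(n / (2 * σ2)) * (ybar - θ) ^ 2) θ
  rw [Fintype.card_fin] at hI
  rw [hI, hR v hv, hμb v hv, hσb2 v hv, hS, hS', hW, hU,
    exponent_eq_completed_square hv.ne' hσ2.ne' hP.ne',
    rpow_div_two_eq_sqrt _ (by positivity), ← Nat.cast_add_one, rpow_natCast]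
  simp only [exp_add]
  ring

/-- the joint unnormalized posterior density of `(θ, v)` in the `K`-dataset
Bayesian hierarchical model with improper uniform prior on the hypermean, written as a
Gaussian in `θ` with precision `1/σ_b²`, mean `μ_b`, and `v`-dependent factor `R(v)`. -/
theorem stmt_14 (K : ℕ) (hK : 1 ≤ K)
    (σ2 n : ℝ) (hσ2 : 0 < σ2) (hn : 0 < n) (ybar : ℝ)
    (σ02 n0 ybar0 : Fin K → ℝ)
    (hσ02 : ∀ k, 0 < σ02 k) (hn0 : ∀ k, 0 < n0 k)
    (N : ℝ → Fin K → ℝ)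
    (hN : ∀ v > (0 : ℝ), ∀ k, N v k = (n0 k / σ02 k + 1 / v)⁻¹)
    (Y : Fin K → ℝ) (hY : ∀ k, Y k = n0 k * ybar0 k / σ02 k)
    (A : ℝ → ℝ)
    (hA : ∀ v > (0 : ℝ), A v = (1 + K) / v - (∑ k, N v k) / v ^ 2)
    (σb2 μb R : ℝ → ℝ)
    (hσb2 : ∀ v > (0 : ℝ), σb2 v = (n / σ2 + 1 / v - 1 / (v ^ 2 * A v))⁻¹)
    (hμb : ∀ v > (0 : ℝ), μb v =
      σb2 v * (n * ybar / σ2 + (∑ k, N v k * Y k) / (v ^ 2 * A v)))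
    (hR : ∀ v > (0 : ℝ), R v =
      v ^ (-(((K : ℝ) + 1) / 2)) * (∏ k, Real.sqrt (N v k)) * (Real.sqrt (A v))⁻¹ *
        Real.exp ((∑ k, Y k * N v k) ^ 2 / (2 * v ^ 2 * A v)) *
        Real.exp ((1 / 2) * ∑ k, Y k ^ 2 * N v k)) :
    ∀ v > (0 : ℝ),
      0 < n / σ2 + 1 / v - 1 / (v ^ 2 * A v) ∧
      ∀ θ : ℝ,
        v ^ (-(((K : ℝ) + 1) / 2)) *
          (∫ μ : ℝ, ∫ θ0 : Fin K → ℝ,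
            Real.exp (-(n / (2 * σ2)) * (ybar - θ) ^ 2 -
              (1 / 2) * ∑ k, (n0 k / σ02 k) * (ybar0 k - θ0 k) ^ 2 -
              (θ - μ) ^ 2 / (2 * v) - (1 / (2 * v)) * ∑ k, (θ0 k - μ) ^ 2)) =
        (2 * π) ^ (((K : ℝ) + 1) / 2) *
          Real.exp (-(1 / 2) * (∑ k, n0 k * ybar0 k ^ 2 / σ02 k) -
            n * ybar ^ 2 / (2 * σ2)) *
          R v * Real.exp (-(θ - μb v) ^ 2 / (2 * σb2 v)) *
          Real.exp (μb v ^ 2 / (2 * σb2 v)) :=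
  stmt_14_general K σ2 n hσ2 hn ybar σ02 n0 ybar0 hσ02 hn0 N hN Y hY A hA σb2 μb R hσb2 hμb hR
end

section
/- For every v > 0, the variance-matching identity 1/v − 1/(v²A(v)) = f(v) · Σₖ cₖ(v)n₀ₖ/σ₀ₖ² holds; equivalently, 1/v − 1/(v²A(v)) = (vK − Σₖ Nₖ(v)) / (v(v(1 + K) − Σₖ Nₖ(v))) and in particular the conditional posterior precision of θ given v in the Bayesian hierarchical model, n/σ² + 1/v − 1/(v²A(v)), equals the conditional posterior precision n/σ² + Σₖ cₖ(v)f(v)n₀ₖ/σ₀ₖ² of θ given a₀ = f(v) under the BHM-matching normalized power prior. -/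
open Real

/-- the variance-matching identity between the conditional posterior
precision of `θ` given `v` in the BHM and the conditional posterior precision of `θ`
given `a₀ = f(v)` under the BHM-matching normalized power prior. -/
theorem stmt_15 (K : ℕ) (hK : 1 ≤ K)
    (σ02 n0 : Fin K → ℝ)
    (hσ02 : ∀ k, 0 < σ02 k) (hn0 : ∀ k, 0 < n0 k)
    (σ2 n : ℝ) (hσ2 : 0 < σ2) (hn : 0 < n)
    (N : ℝ → Fin K → ℝ)
    (hN : ∀ v > (0 : ℝ), ∀ k, N v k = (n0 k / σ02 k + 1 / v)⁻¹)
    (c : ℝ → Fin K → ℝ)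
    (hc : ∀ v > (0 : ℝ), ∀ k, c v k = (1 + n0 k * v / σ02 k)⁻¹)
    (f : ℝ → ℝ)
    (hf : ∀ v > (0 : ℝ), f v = (1 + ∑ k, (n0 k / σ02 k) * N v k)⁻¹)
    (A : ℝ → ℝ)
    (hA : ∀ v > (0 : ℝ), A v = (1 + K) / v - (∑ k, N v k) / v ^ 2) :
    ∀ v > (0 : ℝ),
      1 / v - 1 / (v ^ 2 * A v) = f v * ∑ k, c v k * n0 k / σ02 k ∧
      1 / v - 1 / (v ^ 2 * A v) =
        (v * K - ∑ k, N v k) / (v * (v * (1 + K) - ∑ k, N v k)) ∧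
      n / σ2 + 1 / v - 1 / (v ^ 2 * A v) =
        n / σ2 + ∑ k, c v k * f v * n0 k / σ02 k := by
  intro v hv
  have hv0 : v ≠ 0 := ne_of_gt hv
  have hden : ∀ k, (0:ℝ) < 1 + n0 k * v / σ02 k := by
    intro k; have := hσ02 k; have := hn0 k; positivity
  have hclt : ∀ k, c v k < 1 := by
    intro k
    rw [hc v hv k]
    rw [inv_lt_one_iff₀]
    right
    have h := div_pos (mul_pos (hn0 k) hv) (hσ02 k)
    linarith
  have hcmul : ∀ k, c v k * (σ02 k + n0 k * v) = σ02 k := by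
    intro k
    have h2 : (1 + n0 k * v / σ02 k) ≠ 0 := ne_of_gt (hden k)
    have hs := (hσ02 k).ne'
    rw [hc v hv k]
    rw [inv_mul_eq_div, div_eq_iff h2]
    field_simp
  have hNc : ∀ k, N v k = v * c v k := by
    intro k
    have hs := (hσ02 k).ne'
    have h1 : n0 k / σ02 k + 1 / v ≠ 0 := by
      have := hσ02 k; have := hn0 k; positivity
    have h2 : σ02 k + n0 k * v ≠ 0 := by
      have := hσ02 k; have := mul_pos (hn0 k) hv; positivity
    have hc0 : c v k ≠ 0 := by
      intro h
      have := hcmul k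
      rw [h, zero_mul] at this
      exact hs this.symm
    rw [hN v hv k, inv_eq_iff_eq_inv, mul_inv, hc v hv k, inv_inv]
    field_simp
    ring
  have hcd : ∀ k, c v k * n0 k / σ02 k = (1 - c v k) / v := by
    intro k
    have hs := (hσ02 k).ne'
    rw [div_eq_div_iff hs hv0]
    linear_combination hcmul k
  have hdN : ∀ k, (n0 k / σ02 k) * N v k = 1 - c v k := by
    intro k
    have hs := (hσ02 k).ne'
    rw [hNc k, div_mul_eq_mul_div, mul_comm, mul_div_assoc, mul_comm,
      div_mul_eq_mul_div, div_eq_iff hs]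
    linear_combination hcmul k
  set S := ∑ k, c v k with hS
  have hSN : (∑ k, N v k) = v * S := by
    rw [hS, Finset.mul_sum]
    exact Finset.sum_congr rfl fun k _ => hNc k
  have hSdN : (∑ k, (n0 k / σ02 k) * N v k) = K - S := by
    rw [Finset.sum_congr rfl fun k _ => hdN k, Finset.sum_sub_distrib]
    simp [hS]
  have hScd : (∑ k, c v k * n0 k / σ02 k) = (K - S) / v := by
    rw [Finset.sum_congr rfl fun k _ => hcd k, ← Finset.sum_div, Finset.sum_sub_distrib]
    simp [hS]
  have hSlt : S < K := by
    have hne : (Finset.univ : Finset (Fin K)).Nonempty := by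
      simp only [Finset.univ_nonempty_iff, ← Fin.pos_iff_nonempty]
      omega
    calc S < ∑ _k : Fin K, (1:ℝ) := Finset.sum_lt_sum_of_nonempty hne fun k _ => hclt k
    _ = K := by simp
  have hD : (0:ℝ) < 1 + K - S := by linarith
  have hD0 : (1:ℝ) + K - S ≠ 0 := ne_of_gt hD
  have hvD : v * (1 + ↑K - S) ≠ 0 := mul_ne_zero hv0 hD0
  have hfv : f v = (1 + (K - S))⁻¹ := by rw [hf v hv, hSdN]
  have hfv' : f v = (1 + ↑K - S)⁻¹ := by rw [hfv]; ring_nf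
  have hAv : v ^ 2 * A v = v * (1 + K - S) := by
    rw [hA v hv, hSN]
    field_simp
  have key : 1 / v - 1 / (v * (1 + ↑K - S)) = (↑K - S) / (v * (1 + ↑K - S)) := by
    rw [div_sub_div _ _ hv0 hvD, div_eq_div_iff (mul_ne_zero hv0 hvD) hvD]
    ring
  refine ⟨?_, ?_, ?_⟩
  · rw [hAv, hfv', hScd, key, inv_mul_eq_div, div_div]
  · rw [hAv, hSN, key]
    rw [show v * (v * (1 + ↑K) - v * S) = v * (v * (1 + ↑K - S)) by ring]
    rw [show v * ↑K - v * S = v * (↑K - S) by ring]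
    rw [mul_div_mul_left _ _ hv0]
  · have h3 : (∑ k, c v k * f v * n0 k / σ02 k) = f v * ∑ k, c v k * n0 k / σ02 k := by
      rw [Finset.mul_sum]
      exact Finset.sum_congr rfl fun k _ => by ring
    rw [h3, hAv, hfv', hScd, add_sub_assoc, key, inv_mul_eq_div, div_div]
end

section
/- For every v > 0 and every k ∈ {1,…,K}, the mean-matching identity Nₖ(v)/(v²A(v)) = f(v) · cₖ(v) holds. Consequently, for all real ȳ₀₁, …, ȳ₀K (with Yₖ = n₀ₖȳ₀ₖ/σ₀ₖ²), Σₖ Nₖ(v)Yₖ/(v²A(v)) = f(v) Σₖ cₖ(v)Yₖ, so that (combined with the variance matching) the conditional posterior mean of θ given v in the Bayesian hierarchical model equals the conditional posterior mean of θ given a₀ = f(v) under the BHM-matching normalized power prior. -/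
open Real

/-!
With `aₖ = n₀ₖ/σ₀ₖ²`, the posterior variance `Nₖ = (aₖ + 1/v)⁻¹` equals `v·cₖ`, and the
identity `Nₖ (aₖ + 1/v) = 1` gives `v - Nₖ = v·aₖNₖ`. Summing over `k`,
`v²A(v) = v(1 + K) - Σ Nₖ = v(1 + Σ aₖNₖ) = v / f(v)`, so `Nₖ/(v²A) = v cₖ f / v = f cₖ`.
The weighted-sum identity is this one multiplied by `Yₖ` and summed.
-/

lemma inv_add_one_div_eq_mul_inv {v : ℝ} (hv : v ≠ 0) (a : ℝ) :
    (a + 1 / v)⁻¹ = v * (1 + a * v)⁻¹ := by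
  rw [show a + 1 / v = v⁻¹ * (1 + a * v) by field_simp; ring, mul_inv, inv_inv]

lemma sub_inv_add_one_div {v a : ℝ} (hv : 0 < v) (ha : 0 ≤ a) :
    v - (a + 1 / v)⁻¹ = v * (a * (a + 1 / v)⁻¹) := by
  have : 0 < a + 1 / v := by positivity
  field_simp
  ring

lemma sq_mul_sub_sum_inv_add_one_div {ι : Type*} [Fintype ι] {v : ℝ} (hv : 0 < v)
    {a : ι → ℝ} (ha : ∀ k, 0 ≤ a k) :
    v ^ 2 * ((1 + Fintype.card ι) / v - (∑ k, (a k + 1 / v)⁻¹) / v ^ 2) =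
      v * (1 + ∑ k, a k * (a k + 1 / v)⁻¹) := by
  have hsum : ∑ k, (v - (a k + 1 / v)⁻¹) = v * ∑ k, a k * (a k + 1 / v)⁻¹ := by
    rw [Finset.mul_sum]
    exact Finset.sum_congr rfl fun k _ => sub_inv_add_one_div hv (ha k)
  rw [Finset.sum_sub_distrib, Finset.sum_const, Finset.card_univ, nsmul_eq_mul] at hsum
  calc v ^ 2 * ((1 + Fintype.card ι) / v - (∑ k, (a k + 1 / v)⁻¹) / v ^ 2)
      _ = v + (Fintype.card ι * v - ∑ k, (a k + 1 / v)⁻¹) := by field_simp; ring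
      _ = v * (1 + ∑ k, a k * (a k + 1 / v)⁻¹) := by rw [hsum]; ring

lemma sum_mul_div_eq_mul_sum {ι : Type*} [Fintype ι] {x c y : ι → ℝ} {d f : ℝ}
    (h : ∀ k, x k / d = f * c k) :
    (∑ k, x k * y k) / d = f * ∑ k, c k * y k := by
  rw [Finset.sum_div, Finset.mul_sum]
  refine Finset.sum_congr rfl fun k _ => ?_
  rw [mul_div_right_comm, h k, mul_assoc]

theorem stmt_16_general (K : ℕ)
    (σ02 n0 : Fin K → ℝ)
    (hσ02 : ∀ k, 0 < σ02 k) (hn0 : ∀ k, 0 < n0 k)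
    (N : ℝ → Fin K → ℝ)
    (hN : ∀ v > (0 : ℝ), ∀ k, N v k = (n0 k / σ02 k + 1 / v)⁻¹)
    (c : ℝ → Fin K → ℝ)
    (hc : ∀ v > (0 : ℝ), ∀ k, c v k = (1 + n0 k * v / σ02 k)⁻¹)
    (f : ℝ → ℝ)
    (hf : ∀ v > (0 : ℝ), f v = (1 + ∑ k, (n0 k / σ02 k) * N v k)⁻¹)
    (A : ℝ → ℝ)
    (hA : ∀ v > (0 : ℝ), A v = (1 + K) / v - (∑ k, N v k) / v ^ 2) :
    ∀ v > (0 : ℝ),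
      (∀ k, N v k / (v ^ 2 * A v) = f v * c v k) ∧
      ∀ ybar0 : Fin K → ℝ,
        (∑ k, N v k * (n0 k * ybar0 k / σ02 k)) / (v ^ 2 * A v) =
          f v * ∑ k, c v k * (n0 k * ybar0 k / σ02 k) := by
  intro v hv
  have ha : ∀ k, 0 ≤ n0 k / σ02 k := fun k => (div_pos (hn0 k) (hσ02 k)).le
  have hNc : ∀ k, N v k = v * c v k := fun k => by
    rw [hN v hv, hc v hv, inv_add_one_div_eq_mul_inv hv.ne', mul_div_right_comm]
  have hA' : v ^ 2 * A v = v * (f v)⁻¹ := by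
    have := sq_mul_sub_sum_inv_add_one_div hv ha
    simp only [Fintype.card_fin, ← hN v hv] at this
    rw [hA v hv, this, hf v hv, inv_inv]
  have hmean : ∀ k, N v k / (v ^ 2 * A v) = f v * c v k := fun k => by
    rw [hA', hNc, mul_div_mul_left _ _ hv.ne', div_inv_eq_mul, mul_comm]
  exact ⟨hmean, fun _ => sum_mul_div_eq_mul_sum hmean⟩

/-- the mean-matching identity `Nₖ(v)/(v²A(v)) = f(v)·cₖ(v)`, and its
consequence for the weighted sums appearing in the conditional posterior means of `θ`
under the BHM and the BHM-matching normalized power prior. -/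
theorem stmt_16 (K : ℕ) (hK : 1 ≤ K)
    (σ02 n0 : Fin K → ℝ)
    (hσ02 : ∀ k, 0 < σ02 k) (hn0 : ∀ k, 0 < n0 k)
    (N : ℝ → Fin K → ℝ)
    (hN : ∀ v > (0 : ℝ), ∀ k, N v k = (n0 k / σ02 k + 1 / v)⁻¹)
    (c : ℝ → Fin K → ℝ)
    (hc : ∀ v > (0 : ℝ), ∀ k, c v k = (1 + n0 k * v / σ02 k)⁻¹)
    (f : ℝ → ℝ)
    (hf : ∀ v > (0 : ℝ), f v = (1 + ∑ k, (n0 k / σ02 k) * N v k)⁻¹)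
    (A : ℝ → ℝ)
    (hA : ∀ v > (0 : ℝ), A v = (1 + K) / v - (∑ k, N v k) / v ^ 2) :
    ∀ v > (0 : ℝ),
      (∀ k, N v k / (v ^ 2 * A v) = f v * c v k) ∧
      ∀ ybar0 : Fin K → ℝ,
        (∑ k, N v k * (n0 k * ybar0 k / σ02 k)) / (v ^ 2 * A v) =
          f v * ∑ k, c v k * (n0 k * ybar0 k / σ02 k) :=
  stmt_16_general K σ02 n0 hσ02 hn0 N hN c hc f hf A hA
end

section
/- For every v > 0: (i) 1/(1 + K) < f(v) < 1; (ii) 0 < cₖ(v)f(v) < 1 for each k ∈ {1,…,K} (so each dataset-specific exponent hₖ(a₀) = cₖ(v)f(v) of the BHM-matching normalized power prior is a valid discounting weight); and (iii) f is strictly decreasing on (0,∞). -/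
open Real Set

/-- (i) `1/(1+K) < f(v) < 1`; (ii) `0 < cₖ(v)f(v) < 1` for each `k`
(so each dataset-specific exponent of the BHM-matching NPP is a valid discounting
weight); (iii) `f` is strictly decreasing on `(0, ∞)`. -/
theorem stmt_17 (K : ℕ) (hK : 1 ≤ K)
    (σ02 n0 : Fin K → ℝ)
    (hσ02 : ∀ k, 0 < σ02 k) (hn0 : ∀ k, 0 < n0 k)
    (N : ℝ → Fin K → ℝ)
    (hN : ∀ v > (0 : ℝ), ∀ k, N v k = (n0 k / σ02 k + 1 / v)⁻¹)
    (c : ℝ → Fin K → ℝ)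
    (hc : ∀ v > (0 : ℝ), ∀ k, c v k = (1 + n0 k * v / σ02 k)⁻¹)
    (f : ℝ → ℝ)
    (hf : ∀ v > (0 : ℝ), f v = (1 + ∑ k, (n0 k / σ02 k) * N v k)⁻¹) :
    (∀ v > (0 : ℝ), 1 / (1 + (K : ℝ)) < f v ∧ f v < 1) ∧
    (∀ v > (0 : ℝ), ∀ k, 0 < c v k * f v ∧ c v k * f v < 1) ∧
    StrictAntiOn f (Ioi (0 : ℝ)) := by
  have ha : ∀ k, 0 < n0 k / σ02 k := fun k => div_pos (hn0 k) (hσ02 k)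
  -- bounds on each term
  have hterm : ∀ v > (0 : ℝ), ∀ k, 0 < (n0 k / σ02 k) * N v k ∧
      (n0 k / σ02 k) * N v k < 1 := by
    intro v hv k
    rw [hN v hv k]
    have h1 : 0 < 1 / v := by positivity
    have hd : 0 < n0 k / σ02 k + 1 / v := by linarith [ha k]
    constructor
    · exact mul_pos (ha k) (inv_pos.mpr hd)
    · rw [← div_eq_mul_inv, div_lt_one hd]
      linarith
  have hSpos : ∀ v > (0 : ℝ), 0 < ∑ k, (n0 k / σ02 k) * N v k := by
    intro v hv
    haveI : Nonempty (Fin K) := Fin.pos_iff_nonempty.mp (by omega)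
    exact Finset.sum_pos (fun k _ => (hterm v hv k).1) Finset.univ_nonempty
  have hSlt : ∀ v > (0 : ℝ), (∑ k, (n0 k / σ02 k) * N v k) < K := by
    intro v hv
    haveI : Nonempty (Fin K) := Fin.pos_iff_nonempty.mp (by omega)
    calc (∑ k, (n0 k / σ02 k) * N v k) < ∑ _k : Fin K, (1 : ℝ) :=
          Finset.sum_lt_sum_of_nonempty Finset.univ_nonempty
            (fun k _ => (hterm v hv k).2)
      _ = K := by simp
  have hfpos : ∀ v > (0 : ℝ), 0 < f v := by
    intro v hv
    rw [hf v hv]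
    have := hSpos v hv
    positivity
  have h1 : ∀ v > (0 : ℝ), 1 / (1 + (K : ℝ)) < f v ∧ f v < 1 := by
    intro v hv
    have hS := hSpos v hv
    have hS' := hSlt v hv
    rw [hf v hv]
    constructor
    · rw [one_div]
      exact inv_strictAnti₀ (by linarith) (by linarith)
    · exact inv_lt_one_of_one_lt₀ (by linarith)
  refine ⟨h1, ?_, ?_⟩
  · intro v hv k
    have hcpos : 0 < c v k := by
      rw [hc v hv k]
      have : 0 < n0 k * v / σ02 k := div_pos (mul_pos (hn0 k) hv) (hσ02 k)
      exact inv_pos.mpr (by linarith)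
    have hclt : c v k < 1 := by
      rw [hc v hv k]
      have : 0 < n0 k * v / σ02 k := div_pos (mul_pos (hn0 k) hv) (hσ02 k)
      exact inv_lt_one_of_one_lt₀ (by linarith)
    have hfp := hfpos v hv
    have hfl := (h1 v hv).2
    constructor
    · positivity
    · calc c v k * f v < c v k * 1 := by nlinarith
        _ = c v k := mul_one _
        _ < 1 := hclt
  · intro v1 hv1 v2 hv2 h12
    simp only [mem_Ioi] at hv1 hv2
    rw [hf v1 hv1, hf v2 hv2]
    have hS1 := hSpos v1 hv1
    apply inv_strictAnti₀ (by linarith)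
    have : (∑ k, (n0 k / σ02 k) * N v1 k) < ∑ k, (n0 k / σ02 k) * N v2 k := by
      haveI : Nonempty (Fin K) := Fin.pos_iff_nonempty.mp (by omega)
      apply Finset.sum_lt_sum_of_nonempty Finset.univ_nonempty
      intro k _
      rw [hN v1 hv1 k, hN v2 hv2 k]
      have h1 : (0:ℝ) < 1 / v1 := by positivity
      have h2 : (0:ℝ) < 1 / v2 := by positivity
      have hlt : 1 / v2 < 1 / v1 := by
        apply one_div_lt_one_div_of_lt hv1 h12
      have hd2 : 0 < n0 k / σ02 k + 1 / v2 := by linarith [ha k]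
      have : (n0 k / σ02 k + 1 / v2)⁻¹ > (n0 k / σ02 k + 1 / v1)⁻¹ :=
        inv_strictAnti₀ hd2 (by linarith)
      have hak := ha k
      nlinarith
    linarith
end

section
/- Fix v > 0, an integer K ≥ 1, an index k ∈ {1,…,K}, and positive reals s₁, …, s_K (where sⱼ = σ₀ⱼ²/n₀ⱼ is the j-th historical variance-to-sample-size ratio). Define the dataset-specific discounting weight a₀ₖ(s₁,…,s_K) = (sₖ/(sₖ + v)) · [1 + Σⱼ v/(v + sⱼ)]⁻¹ (which equals cₖ(v)f(v) for the BHM-matching normalized power prior). Then, holding v and all sⱼ with j ≠ k fixed, the map sₖ ↦ a₀ₖ is strictly increasing on (0,∞); that is, the BHM-matching NPP discounts a historical dataset more (smaller a₀ₖ) when its effective sample size relative to its variance is larger. -/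
open Real Set

/-!
Write `C ≥ 0` for the contribution of the other datasets to the sum. Clearing the denominator
`sₖ + v` turns the weight into `sₖ / ((1 + C) sₖ + (2 + C) v)`, a ratio `x / (a x + b)` with
`a ≥ 0 < b`, and such a ratio is strictly increasing for `x > 0` since
`x / (a x + b) < y / (a y + b) ↔ b x < b y`.
-/

lemma strictMonoOn_div_mul_add {a b : ℝ} (ha : 0 ≤ a) (hb : 0 < b) :
    StrictMonoOn (fun x : ℝ => x / (a * x + b)) (Ioi 0) := by
  intro x hx y hy hxy
  have hx' : 0 < a * x + b := by have : (0 : ℝ) < x := hx; positivity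
  have hy' : 0 < a * y + b := by have : (0 : ℝ) < y := hy; positivity
  rw [div_lt_div_iff₀ hx' hy']
  nlinarith

lemma div_add_mul_inv_one_add_div_add {x v C : ℝ} (hxv : x + v ≠ 0) :
    x / (x + v) * (1 + (v / (v + x) + C))⁻¹ = x / ((1 + C) * x + (2 + C) * v) := by
  rw [add_comm v x]
  field_simp
  ring

lemma sum_comp_update {ι : Type*} [Fintype ι] [DecidableEq ι] (f : ℝ → ℝ) (s : ι → ℝ)
    (k : ι) (x : ℝ) :
    ∑ j, f (Function.update s k x j) = f x + ∑ j ∈ Finset.univ \ {k}, f (s j) := by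
  simp_rw [Function.apply_update (fun _ => f)]
  exact Finset.sum_update_of_mem (Finset.mem_univ k) _ _

theorem stmt_19_general (K : ℕ) (v : ℝ) (hv : 0 < v)
    (s : Fin K → ℝ) (hs : ∀ j, 0 < s j) (k : Fin K)
    (a0k : (Fin K → ℝ) → ℝ)
    (ha0k : ∀ t : Fin K → ℝ,
      a0k t = (t k / (t k + v)) * (1 + ∑ j, v / (v + t j))⁻¹) :
    StrictMonoOn (fun x : ℝ => a0k (Function.update s k x)) (Ioi (0 : ℝ)) := by
  set C := ∑ j ∈ Finset.univ \ {k}, v / (v + s j)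
  have hC : 0 ≤ C := Finset.sum_nonneg fun j _ => (div_pos hv (add_pos hv (hs j))).le
  refine (strictMonoOn_div_mul_add (a := 1 + C) (b := (2 + C) * v) (by linarith)
    (by positivity)).congr fun x (hx : 0 < x) => ?_
  dsimp only
  rw [ha0k, Function.update_self, sum_comp_update (fun y => v / (v + y)),
    div_add_mul_inv_one_add_div_add (by linarith)]

/-- holding `v` and the other variance-to-sample-size ratios fixed, the
`k`-th dataset-specific discounting weight `a₀ₖ = (sₖ/(sₖ+v))·[1 + Σⱼ v/(v+sⱼ)]⁻¹` of the
BHM-matching normalized power prior is strictly increasing in `sₖ = σ₀ₖ²/n₀ₖ` on `(0,∞)`. -/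
theorem stmt_19 (K : ℕ) (hK : 1 ≤ K) (v : ℝ) (hv : 0 < v)
    (s : Fin K → ℝ) (hs : ∀ j, 0 < s j) (k : Fin K)
    (a0k : (Fin K → ℝ) → ℝ)
    (ha0k : ∀ t : Fin K → ℝ,
      a0k t = (t k / (t k + v)) * (1 + ∑ j, v / (v + t j))⁻¹) :
    StrictMonoOn (fun x : ℝ => a0k (Function.update s k x)) (Ioi (0 : ℝ)) :=
  stmt_19_general K v hv s hs k a0k ha0k
end
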